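/- arXiv:2211.10556 — 5 statements merged into one kernel-verified Lean document; each statement's English description precedes it below -/
import Mathlib

section
/- Let G be an n-vertex graph that is a φ-expander, and let G' be obtained from G by adding a set V' of at most n new vertices together with a matching M connecting every vertex of V' to a distinct vertex of G. Then G' is a (φ/2)-expander. -/
open SimpleGraph

/-- The set of edges of `G` crossing the cut `(A, Aᶜ)`. -/
def cutEdges {V : Type*} [Fintype V] [DecidableEq V] (G : SimpleGraph V) [DecidableRel G.Adj]
    (A : Finset V) : Finset (Sym2 V) :=
  G.edgeFinset.filter (fun e => ∃ u ∈ A, ∃ v ∈ Aᶜ, e = s(u, v))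

/-- `G` is a `φ`-expander: every cut `(A, Aᶜ)` has sparsity at least `φ`. -/
def IsExpander {V : Type*} [Fintype V] [DecidableEq V] (G : SimpleGraph V)
    [DecidableRel G.Adj] (φ : ℝ) : Prop :=
  ∀ A : Finset V, A.Nonempty → Aᶜ.Nonempty →
    φ * min (A.card : ℝ) ((Aᶜ : Finset V).card : ℝ) ≤ ((cutEdges G A).card : ℝ)

/-- Auxiliary counting lemma: a finset of a sum type splits by constructor. -/
lemma card_split_sum {V V' : Type*} [Fintype V] [DecidableEq V] [Fintype V'] [DecidableEq V']
    (A : Finset (V ⊕ V')) :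
    A.card = (Finset.univ.filter (fun v : V => Sum.inl v ∈ A)).card
      + (Finset.univ.filter (fun x : V' => Sum.inr x ∈ A)).card := by
  classical
  have hA : A = ((Finset.univ.filter (fun v : V => Sum.inl v ∈ A)).image Sum.inl)
      ∪ ((Finset.univ.filter (fun x : V' => Sum.inr x ∈ A)).image Sum.inr) := by
    ext s
    cases s <;> simp
  have hdisj : Disjoint ((Finset.univ.filter (fun v : V => Sum.inl v ∈ A)).image Sum.inl)
      ((Finset.univ.filter (fun x : V' => Sum.inr x ∈ A)).image Sum.inr) := by
    rw [Finset.disjoint_left]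
    rintro s hs hs'
    simp only [Finset.mem_image] at hs hs'
    obtain ⟨v, _, rfl⟩ := hs
    obtain ⟨x, _, h⟩ := hs'
    exact nomatch h
  conv_lhs => rw [hA]
  rw [Finset.card_union_of_disjoint hdisj, Finset.card_image_of_injective _ Sum.inl_injective,
    Finset.card_image_of_injective _ Sum.inr_injective]

/-- Auxiliary real arithmetic for the final bound. -/
lemma arith_bound (φ a b c d x cut1 cut' : ℝ) (hφ0 : 0 < φ) (hφ1 : φ < 1)
    (h1 : cut1 + x ≤ cut') (h2 : φ * min a c ≤ cut1)
    (hb : b ≤ a + x) (hd : d ≤ c + x) (hx : 0 ≤ x) :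
    φ / 2 * min (a + b) (c + d) ≤ cut' := by
  rcases le_total a c with h | h
  · rw [min_eq_left h] at h2
    have hm : min (a + b) (c + d) ≤ a + b := min_le_left _ _
    have h3 : φ * b ≤ φ * (a + x) := by nlinarith
    have h4 : φ * x ≤ 1 * x := mul_le_mul_of_nonneg_right hφ1.le hx
    have h5 : φ / 2 * min (a + b) (c + d) ≤ φ / 2 * (a + b) := by nlinarith
    nlinarith
  · rw [min_eq_right h] at h2
    have hm : min (a + b) (c + d) ≤ c + d := min_le_right _ _
    have h3 : φ * d ≤ φ * (c + x) := by nlinarith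
    have h4 : φ * x ≤ 1 * x := mul_le_mul_of_nonneg_right hφ1.le hx
    have h5 : φ / 2 * min (a + b) (c + d) ≤ φ / 2 * (c + d) := by nlinarith
    nlinarith

/-- If `G` is a `φ`-expander and `G'` is obtained from `G` by adding a set `V'` of at most
`|V(G)|` new vertices, together with a matching connecting every vertex of `V'` to a distinct
vertex of `G`, then `G'` is a `φ/2`-expander. -/
theorem stmt_0 {V V' : Type*} [Fintype V] [DecidableEq V] [Fintype V'] [DecidableEq V']
    (φ : ℝ) (hφ0 : 0 < φ) (hφ1 : φ < 1)
    (G : SimpleGraph V) [DecidableRel G.Adj] (hG : IsExpander G φ)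
    (hcard : Fintype.card V' ≤ Fintype.card V)
    (f : V' → V) (hf : Function.Injective f)
    (G' : SimpleGraph (V ⊕ V')) [DecidableRel G'.Adj]
    (hG'₁ : ∀ u v : V, G'.Adj (Sum.inl u) (Sum.inl v) ↔ G.Adj u v)
    (hG'₂ : ∀ (u : V) (x : V'), G'.Adj (Sum.inl u) (Sum.inr x) ↔ u = f x)
    (hG'₃ : ∀ x y : V', ¬ G'.Adj (Sum.inr x) (Sum.inr y)) :
    IsExpander G' (φ / 2) := by
  classical
  intro A hA hAc
  set A₁ : Finset V := Finset.univ.filter (fun v : V => Sum.inl v ∈ A) with hA₁def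
  set A₂ : Finset V' := Finset.univ.filter (fun x : V' => Sum.inr x ∈ A) with hA₂def
  set X : Finset V' :=
    Finset.univ.filter (fun x : V' => (Sum.inr x ∈ A ↔ Sum.inl (f x) ∉ A)) with hXdef
  -- the lifted G-cut edges
  set E1 : Finset (Sym2 (V ⊕ V')) := (cutEdges G A₁).image (Sym2.map Sum.inl) with hE1def
  -- the crossing matching edges
  set E2 : Finset (Sym2 (V ⊕ V')) :=
    X.image (fun x => s(Sum.inl (f x), Sum.inr x)) with hE2def
  -- E1 is inside the cut
  have hE1sub : E1 ⊆ cutEdges G' A := by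
    intro e he
    simp only [hE1def, Finset.mem_image] at he
    obtain ⟨e', he', rfl⟩ := he
    simp only [cutEdges, Finset.mem_filter, mem_edgeFinset] at he' ⊢
    obtain ⟨hedge, u, hu, v, hv, rfl⟩ := he'
    rw [Sym2.map_pair_eq]
    refine ⟨?_, Sum.inl u, ?_, Sum.inl v, ?_, rfl⟩
    · rw [mem_edgeSet, hG'₁]
      rwa [mem_edgeSet] at hedge
    · simpa [hA₁def] using hu
    · simp only [Finset.mem_compl] at hv ⊢
      simpa [hA₁def] using hv
  -- E2 is inside the cut
  have hE2sub : E2 ⊆ cutEdges G' A := by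
    intro e he
    simp only [hE2def, Finset.mem_image] at he
    obtain ⟨x, hx, rfl⟩ := he
    simp only [hXdef, Finset.mem_filter, Finset.mem_univ, true_and] at hx
    have hadj : G'.Adj (Sum.inl (f x)) (Sum.inr x) := (hG'₂ (f x) x).2 rfl
    simp only [cutEdges, Finset.mem_filter, mem_edgeFinset, mem_edgeSet]
    refine ⟨hadj, ?_⟩
    by_cases h : Sum.inr x ∈ A
    · exact ⟨Sum.inr x, h, Sum.inl (f x), Finset.mem_compl.2 (hx.1 h), Sym2.eq_swap⟩
    · have : Sum.inl (f x) ∈ A := by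
        by_contra h'
        exact h (hx.2 h')
      exact ⟨Sum.inl (f x), this, Sum.inr x, Finset.mem_compl.2 h, rfl⟩
  have hdisj : Disjoint E1 E2 := by
    rw [Finset.disjoint_left]
    intro e he1 he2
    simp only [hE1def, hE2def, Finset.mem_image] at he1 he2
    obtain ⟨e', _, rfl⟩ := he1
    obtain ⟨x, _, hx⟩ := he2
    induction e' using Sym2.inductionOn with
    | hf u v =>
      rw [Sym2.map_pair_eq, Sym2.eq_iff] at hx
      rcases hx with ⟨h1, h2⟩ | ⟨h1, h2⟩ <;> exact nomatch h2
  have hcardE1 : E1.card = (cutEdges G A₁).card :=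
    Finset.card_image_of_injective _ (Sym2.map.injective Sum.inl_injective)
  have hcardE2 : E2.card = X.card := by
    apply Finset.card_image_of_injOn
    intro x _ y _ hxy
    rw [Sym2.eq_iff] at hxy
    rcases hxy with ⟨h1, h2⟩ | ⟨h1, h2⟩
    · exact Sum.inr_injective h2
    · exact nomatch h1
  have hmain : (cutEdges G A₁).card + X.card ≤ (cutEdges G' A).card := by
    rw [← hcardE1, ← hcardE2, ← Finset.card_union_of_disjoint hdisj]
    exact Finset.card_le_card (Finset.union_subset hE1sub hE2sub)
  -- the two matching-count bounds
  set X₁ : Finset V' := A₂.filter (fun x => f x ∉ A₁) with hX₁def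
  set X₂ : Finset V' := A₂ᶜ.filter (fun x => f x ∈ A₁) with hX₂def
  have hX₁sub : X₁ ⊆ X := by
    intro x hx
    simp only [hX₁def, Finset.mem_filter, hA₂def, hA₁def, Finset.mem_univ, true_and] at hx
    simp only [hXdef, Finset.mem_filter, Finset.mem_univ, true_and]
    exact ⟨fun _ => hx.2, fun _ => hx.1⟩
  have hX₂sub : X₂ ⊆ X := by
    intro x hx
    simp only [hX₂def, Finset.mem_filter, Finset.mem_compl, hA₂def, hA₁def,
      Finset.mem_univ, true_and, Finset.mem_filter] at hx
    simp only [hXdef, Finset.mem_filter, Finset.mem_univ, true_and]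
    exact ⟨fun h => absurd h hx.1, fun h => absurd hx.2 h⟩
  -- counting bounds
  have hb : A₂.card ≤ A₁.card + X.card := by
    have h1 : (A₂.filter (fun x => f x ∈ A₁)).card ≤ A₁.card :=
      Finset.card_le_card_of_injOn f (fun x hx => (Finset.mem_filter.1 hx).2) hf.injOn
    have h2 : (A₂.filter (fun x => f x ∈ A₁)).card + X₁.card = A₂.card := by
      rw [hX₁def]; exact Finset.card_filter_add_card_filter_not _
    have h3 : X₁.card ≤ X.card := Finset.card_le_card hX₁sub
    omega
  have hd : A₂ᶜ.card ≤ A₁ᶜ.card + X.card := by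
    have h1 : (A₂ᶜ.filter (fun x => f x ∉ A₁)).card ≤ A₁ᶜ.card :=
      Finset.card_le_card_of_injOn f
        (fun x hx => Finset.mem_compl.2 (Finset.mem_filter.1 hx).2) hf.injOn
    have h2 : X₂.card + (A₂ᶜ.filter (fun x => f x ∉ A₁)).card = A₂ᶜ.card := by
      rw [hX₂def]; exact Finset.card_filter_add_card_filter_not _
    have h3 : X₂.card ≤ X.card := Finset.card_le_card hX₂sub
    omega
  -- expander bound on the V-part
  have hcut1 : φ * min (A₁.card : ℝ) ((A₁ᶜ : Finset V).card : ℝ)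
      ≤ ((cutEdges G A₁).card : ℝ) := by
    rcases Finset.eq_empty_or_nonempty A₁ with h | h
    · have h0 : (A₁.card : ℝ) = 0 := by simp [h]
      have hle : min ((A₁.card : ℝ)) ((A₁ᶜ.card : ℝ)) ≤ 0 := (min_le_left _ _).trans h0.le
      have hneg : φ * min ((A₁.card : ℝ)) ((A₁ᶜ.card : ℝ)) ≤ 0 :=
        mul_nonpos_of_nonneg_of_nonpos hφ0.le hle
      exact hneg.trans (by positivity)
    · rcases Finset.eq_empty_or_nonempty A₁ᶜ with h' | h'
      · have h0 : ((A₁ᶜ : Finset V).card : ℝ) = 0 := by simp [h']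
        have hle : min ((A₁.card : ℝ)) ((A₁ᶜ.card : ℝ)) ≤ 0 := (min_le_right _ _).trans h0.le
        have hneg : φ * min ((A₁.card : ℝ)) ((A₁ᶜ.card : ℝ)) ≤ 0 :=
          mul_nonpos_of_nonneg_of_nonpos hφ0.le hle
        exact hneg.trans (by positivity)
      · exact hG A₁ h h'
  -- cardinality splits
  have hsplitA : A.card = A₁.card + A₂.card := by
    rw [hA₁def, hA₂def]; exact card_split_sum A
  have hsplitAc : Aᶜ.card = A₁ᶜ.card + A₂ᶜ.card := by
    have h := card_split_sum Aᶜ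
    have e1 : Finset.univ.filter (fun v : V => Sum.inl v ∈ Aᶜ) = A₁ᶜ := by
      ext v; simp [hA₁def]
    have e2 : Finset.univ.filter (fun x : V' => Sum.inr x ∈ Aᶜ) = A₂ᶜ := by
      ext x; simp [hA₂def]
    rw [e1, e2] at h; exact h
  -- final arithmetic
  have hfin := arith_bound φ (A₁.card : ℝ) (A₂.card : ℝ) ((A₁ᶜ : Finset V).card : ℝ)
    ((A₂ᶜ : Finset V').card : ℝ) (X.card : ℝ) ((cutEdges G A₁).card : ℝ)
    ((cutEdges G' A).card : ℝ) hφ0 hφ1 (by exact_mod_cast hmain) hcut1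
    (by exact_mod_cast hb) (by exact_mod_cast hd) (by positivity)
  rw [hsplitA, hsplitAc]
  push_cast
  exact hfin
end

section
/- Let k_1, …, k_r be non-negative integers with Σ_{j=1}^r k_j = k, and suppose max_j k_j ≤ αk for some 0 < α ≤ 1. Then there exists a partition (J_1, J_2) of the index set {1,…,r} such that Σ_{j∈J_1} k_j ≥ k·min(1−α, 1/3) and Σ_{j∈J_2} k_j ≥ k·min(1−α, 1/3). -/
/-- Greedy partition: if `k₁,…,k_r` are non-negative integers summing to `k` whose maximum is
at most `α·k` for some `0 < α ≤ 1`, then the index set can be partitioned into two parts each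
carrying total weight at least `k · min(1-α, 1/3)`. -/
theorem stmt_3 (r k : ℕ) (f : Fin r → ℕ) (hsum : ∑ j, f j = k)
    (α : ℝ) (hα0 : 0 < α) (hα1 : α ≤ 1)
    (hmax : ∀ j, (f j : ℝ) ≤ α * k) :
    ∃ J₁ J₂ : Finset (Fin r), J₁ ∪ J₂ = Finset.univ ∧ Disjoint J₁ J₂ ∧
      (k : ℝ) * min (1 - α) (1 / 3) ≤ ((∑ j ∈ J₁, f j : ℕ) : ℝ) ∧
      (k : ℝ) * min (1 - α) (1 / 3) ≤ ((∑ j ∈ J₂, f j : ℕ) : ℝ) := by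
  have hk0 : (0:ℝ) ≤ (k:ℝ) := Nat.cast_nonneg k
  have hm1 : min (1 - α) (1/3 : ℝ) ≤ 1 - α := min_le_left _ _
  have hm2 : min (1 - α) (1/3 : ℝ) ≤ 1/3 := min_le_right _ _
  have ht1 : (k:ℝ) * min (1 - α) (1/3) ≤ (k:ℝ) * (1 - α) :=
    mul_le_mul_of_nonneg_left hm1 hk0
  have ht2 : (k:ℝ) * min (1 - α) (1/3) ≤ (k:ℝ) * (1/3) :=
    mul_le_mul_of_nonneg_left hm2 hk0
  by_cases htriv : (k:ℝ) * min (1 - α) (1/3) ≤ 0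
  · refine ⟨Finset.univ, ∅, by simp, by simp, ?_, ?_⟩
    · rw [hsum]; linarith
    · simpa using htriv
  push_neg at htriv
  have hkpos : 0 < k := by
    rcases Nat.eq_zero_or_pos k with h | h
    · exfalso; rw [h] at htriv; simpa using htriv
    · exact h
  by_cases hbig : ∃ j, (k:ℝ) ≤ 3 * (f j : ℝ)
  · obtain ⟨j, hj⟩ := hbig
    refine ⟨{j}, {j}ᶜ, by simp, disjoint_compl_right, ?_, ?_⟩
    · rw [Finset.sum_singleton]; linarith
    · have hc : ∑ i ∈ {j}, f i + ∑ i ∈ {j}ᶜ, f i = k := by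
        rw [Finset.sum_add_sum_compl, hsum]
      rw [Finset.sum_singleton] at hc
      have hc' : (f j : ℝ) + ((∑ i ∈ {j}ᶜ, f i : ℕ) : ℝ) = k := by exact_mod_cast hc
      have := hmax j
      linarith
  · push_neg at hbig
    have hsmall : ∀ j, 3 * f j < k := by
      intro j
      have h1 : ((3 * f j : ℕ) : ℝ) < (k:ℝ) := by push_cast; linarith [hbig j]
      exact_mod_cast h1
    obtain ⟨S, hS, hmin⟩ := Finset.exists_min_image
      (Finset.univ.powerset.filter fun T => k ≤ 3 * ∑ i ∈ T, f i)
      (fun T => ∑ i ∈ T, f i)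
      ⟨Finset.univ, by simp [hsum]; omega⟩
    simp only [Finset.mem_filter, Finset.mem_powerset] at hS
    have hSlb : k ≤ 3 * ∑ i ∈ S, f i := hS.2
    have hcompl : ∑ i ∈ S, f i + ∑ i ∈ Sᶜ, f i = k := by
      rw [Finset.sum_add_sum_compl, hsum]
    have hSub : 3 * ∑ i ∈ S, f i ≤ 2 * k := by
      by_contra hcon
      push_neg at hcon
      have hsne : ∑ i ∈ S, f i ≠ 0 := by omega
      obtain ⟨j, hjS, hjne⟩ := Finset.exists_ne_zero_of_sum_ne_zero hsne
      have herase : f j + ∑ i ∈ S.erase j, f i = ∑ i ∈ S, f i :=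
        Finset.add_sum_erase S f hjS
      have hmem : S.erase j ∈ Finset.univ.powerset.filter
          fun T => k ≤ 3 * ∑ i ∈ T, f i := by
        simp only [Finset.mem_filter, Finset.mem_powerset]
        refine ⟨Finset.subset_univ _, ?_⟩
        have := hsmall j
        omega
      have := hmin _ hmem
      omega
    have hclb : k ≤ 3 * ∑ i ∈ Sᶜ, f i := by omega
    refine ⟨S, Sᶜ, by simp, disjoint_compl_right, ?_, ?_⟩
    · have : (k:ℝ) ≤ 3 * ((∑ i ∈ S, f i : ℕ) : ℝ) := by exact_mod_cast hSlb
      linarith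
    · have : (k:ℝ) ≤ 3 * ((∑ i ∈ Sᶜ, f i : ℕ) : ℝ) := by exact_mod_cast hclb
      linarith
end

section
/- Let H be a graph with m ≥ 2 edges, let S ⊆ V(H) be a set of vertices not all of which are isolated in H, let 0 < φ < 1/2 and let d ≥ (32 log₂ m)/φ. For integers i ≥ 0 define L_i = B_H(S, i). If the set B = B_H(S, d) satisfies |E_H(B)| < |E(H)|, then there exists an index 1 ≤ i < ⌊d/2⌋ − 1 such that |δ_H(L_i)| < (φ/2)·|E_H(L_i)|. -/
open SimpleGraph

/-- Numeric core: if `N ≥ 16·log₂ m/φ − 3` then `m ≤ (1+φ/2)^N`. -/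
lemma stmt_4_numeric (m : ℕ) (hm2 : 2 ≤ m) (φ : ℝ) (hφ0 : 0 < φ) (hφ1 : φ < 1 / 2)
    (N : ℕ) (hN : 16 * Real.logb 2 m / φ - 3 ≤ N) : (m : ℝ) ≤ (1 + φ / 2) ^ N := by
  have hm0 : (0:ℝ) < m := by positivity
  have hm2' : (2:ℝ) ≤ m := by exact_mod_cast hm2
  have hlog2 : (0:ℝ) < Real.log 2 := Real.log_pos (by norm_num)
  have hlogm : Real.log 2 ≤ Real.log m := Real.log_le_log (by norm_num) hm2'
  have hLb : 1 ≤ Real.logb 2 m := by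
    rw [Real.logb, le_div_iff₀ hlog2]; linarith
  have hpos : (0:ℝ) < 1 + φ / 2 := by linarith
  have hinv : (1 + φ/2) * (1 + φ/2)⁻¹ = 1 := mul_inv_cancel₀ (by positivity)
  have hinvle : (1 + φ/2)⁻¹ ≤ 1 - 2*φ/5 := by
    nlinarith [hinv, inv_pos.mpr hpos]
  have hloglb : 2*φ/5 ≤ Real.log (1 + φ/2) := by
    have h := Real.one_sub_inv_le_log_of_pos hpos
    linarith
  have hlogeq : Real.log m = Real.logb 2 m * Real.log 2 := by
    rw [Real.logb]; field_simp
  have hkey : Real.log m ≤ N * Real.log (1 + φ/2) := by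
    have h1 : (16 * Real.logb 2 m / φ - 3) * (2*φ/5) ≤ (N:ℝ) * Real.log (1 + φ/2) :=
      mul_le_mul hN hloglb (by positivity) (Nat.cast_nonneg N)
    have h2 : (16 * Real.logb 2 m / φ - 3) * (2*φ/5) = 32/5 * Real.logb 2 m - 6*φ/5 := by
      field_simp; ring
    have hl2 : Real.log 2 < 0.6931471808 := Real.log_two_lt_d9
    rw [hlogeq]
    nlinarith
  exact (Real.log_le_log_iff hm0 (by positivity)).mp (by rwa [Real.log_pow])

/-- Ball growing: let `H` be a graph with `m ≥ 2` edges, `S` a set of vertices not all of which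
are isolated, `0 < φ < 1/2` and `d ≥ (32 log₂ m)/φ`. Let `L i = B_H(S, i)`. If the ball
`B = B_H(S, d)` satisfies `|E_H(B)| < m`, then there is an index `1 ≤ i < ⌊d/2⌋ - 1` with
`|δ_H(L i)| < (φ/2)·|E_H(L i)|`. -/
theorem stmt_4 {V : Type*} [Fintype V] (H : SimpleGraph V)
    (m : ℕ) (hm : m = H.edgeSet.ncard) (hm2 : 2 ≤ m)
    (S : Set V) (hS : ∃ s ∈ S, ∃ v, H.Adj s v)
    (φ d : ℝ) (hφ0 : 0 < φ) (hφ1 : φ < 1 / 2) (hd : 32 * Real.logb 2 m / φ ≤ d)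
    (L : ℕ → Set V)
    (hL : ∀ i : ℕ, L i = {v | ∃ s ∈ S, ∃ w : H.Walk s v, w.length ≤ i})
    (B : Set V) (hB : B = {v | ∃ s ∈ S, ∃ w : H.Walk s v, (w.length : ℝ) ≤ d})
    (hEB : {e ∈ H.edgeSet | ∀ v ∈ e, v ∈ B}.ncard < m) :
    ∃ i : ℕ, 1 ≤ i ∧ (i : ℤ) < ⌊d / 2⌋ - 1 ∧
      ({e ∈ H.edgeSet | ∃ u v, e = s(u, v) ∧ u ∈ L i ∧ v ∉ L i}.ncard : ℝ) <
        φ / 2 * ({e ∈ H.edgeSet | ∀ v ∈ e, v ∈ L i}.ncard : ℝ) := by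
  by_contra hcon
  push_neg at hcon
  have hLmono : ∀ i j : ℕ, i ≤ j → L i ⊆ L j := by
    intro i j hij v hv
    rw [hL] at hv ⊢
    obtain ⟨s, hs, w, hw⟩ := hv
    exact ⟨s, hs, w, hw.trans hij⟩
  have hESsub : ∀ i : ℕ, {e ∈ H.edgeSet | ∀ v ∈ e, v ∈ L i} ⊆
      {e ∈ H.edgeSet | ∀ v ∈ e, v ∈ L (i+1)} := by
    rintro i e ⟨heE, h⟩
    exact ⟨heE, fun x hx => hLmono i (i+1) (Nat.le_succ i) (h x hx)⟩
  have hDSsub : ∀ i : ℕ, {e ∈ H.edgeSet | ∃ u v, e = s(u, v) ∧ u ∈ L i ∧ v ∉ L i} ⊆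
      {e ∈ H.edgeSet | ∀ v ∈ e, v ∈ L (i+1)} := by
    rintro i e ⟨heE, u, v, rfl, hu, hv⟩
    have hadj : H.Adj u v := H.mem_edgeSet.mp heE
    have hv1 : v ∈ L (i+1) := by
      rw [hL] at hu ⊢
      obtain ⟨s, hs, w, hw⟩ := hu
      exact ⟨s, hs, w.concat hadj, by rw [Walk.length_concat]; omega⟩
    refine ⟨heE, fun x hx => ?_⟩
    rcases Sym2.mem_iff.mp hx with rfl | rfl
    · exact hLmono i (i+1) (Nat.le_succ i) hu
    · exact hv1
  have hdisj : ∀ i : ℕ, Disjoint {e ∈ H.edgeSet | ∀ v ∈ e, v ∈ L i}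
      {e ∈ H.edgeSet | ∃ u v, e = s(u, v) ∧ u ∈ L i ∧ v ∉ L i} := by
    intro i
    rw [Set.disjoint_left]
    rintro e ⟨heE, hall⟩ ⟨_, u, v, rfl, hu, hv⟩
    exact hv (hall v (Sym2.mem_mk_right u v))
  have hstep : ∀ i : ℕ,
      {e ∈ H.edgeSet | ∀ v ∈ e, v ∈ L i}.ncard +
        {e ∈ H.edgeSet | ∃ u v, e = s(u, v) ∧ u ∈ L i ∧ v ∉ L i}.ncard ≤
      {e ∈ H.edgeSet | ∀ v ∈ e, v ∈ L (i+1)}.ncard := by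
    intro i
    rw [← Set.ncard_union_eq (hdisj i) (Set.toFinite _) (Set.toFinite _)]
    exact Set.ncard_le_ncard (Set.union_subset (hESsub i) (hDSsub i)) (Set.toFinite _)
  have hES1 : 1 ≤ {e ∈ H.edgeSet | ∀ v ∈ e, v ∈ L 1}.ncard := by
    obtain ⟨s, hs, v, hadj⟩ := hS
    have hmem : s(s, v) ∈ {e ∈ H.edgeSet | ∀ v ∈ e, v ∈ L 1} := by
      refine ⟨H.mem_edgeSet.mpr hadj, fun x hx => ?_⟩
      rcases Sym2.mem_iff.mp hx with rfl | rfl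
      · rw [hL]; exact ⟨x, hs, Walk.nil, by simp⟩
      · rw [hL]; exact ⟨s, hs, Walk.cons hadj Walk.nil, by simp⟩
    exact Set.ncard_pos (Set.toFinite _) |>.mpr ⟨_, hmem⟩
  have hsubB : ∀ i : ℕ, (i : ℝ) ≤ d → {e ∈ H.edgeSet | ∀ v ∈ e, v ∈ L i}.ncard < m := by
    intro i hi
    refine lt_of_le_of_lt (Set.ncard_le_ncard ?_ (Set.toFinite _)) hEB
    rintro e ⟨heE, h⟩
    refine ⟨heE, fun x hx => ?_⟩
    have hxL := h x hx
    rw [hL] at hxL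
    rw [hB]
    obtain ⟨s, hs, w, hw⟩ := hxL
    refine ⟨s, hs, w, le_trans ?_ hi⟩
    exact_mod_cast hw
  -- numeric setup
  have hlog2 : (0:ℝ) < Real.log 2 := Real.log_pos (by norm_num)
  have hLb : 1 ≤ Real.logb 2 m := by
    rw [Real.logb, le_div_iff₀ hlog2]
    have : Real.log 2 ≤ Real.log m :=
      Real.log_le_log (by norm_num) (by exact_mod_cast hm2)
    linarith
  have hdφ : 32 * Real.logb 2 m ≤ d * φ := (div_le_iff₀ hφ0).mp hd
  have hdpos : 0 < d := by nlinarith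
  have hd64 : 64 ≤ d := by nlinarith
  have hfloor : (32:ℤ) ≤ ⌊d/2⌋ := by
    rw [Int.le_floor]; push_cast; linarith
  set N : ℕ := (⌊d/2⌋ - 2).toNat with hNdef
  have hNcast : (N:ℤ) = ⌊d/2⌋ - 2 := Int.toNat_of_nonneg (by omega)
  have hNrealEq : (N:ℝ) = ((⌊d/2⌋:ℤ):ℝ) - 2 := by
    have h := congrArg (fun z : ℤ => (z:ℝ)) hNcast
    push_cast at h
    exact h
  have hfl1 : (d/2 - 1 : ℝ) < ((⌊d/2⌋:ℤ):ℝ) := Int.sub_one_lt_floor _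
  have hfl2 : ((⌊d/2⌋:ℤ):ℝ) ≤ d/2 := Int.floor_le _
  have hNlb : d/2 - 3 ≤ (N:ℝ) := by rw [hNrealEq]; linarith
  have hNub : (N:ℝ) ≤ d/2 - 2 := by rw [hNrealEq]; linarith
  have hcon' : ∀ i : ℕ, 1 ≤ i → i ≤ N →
      φ/2 * ({e ∈ H.edgeSet | ∀ v ∈ e, v ∈ L i}.ncard : ℝ) ≤
      ({e ∈ H.edgeSet | ∃ u v, e = s(u, v) ∧ u ∈ L i ∧ v ∉ L i}.ncard : ℝ) := by
    intro i h1 h2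
    refine hcon i h1 ?_
    have : (i:ℤ) ≤ (N:ℤ) := by exact_mod_cast h2
    omega
  have hgrow : ∀ i : ℕ, 1 ≤ i → i ≤ N →
      (1 + φ/2) * ({e ∈ H.edgeSet | ∀ v ∈ e, v ∈ L i}.ncard : ℝ) ≤
      ({e ∈ H.edgeSet | ∀ v ∈ e, v ∈ L (i+1)}.ncard : ℝ) := by
    intro i h1 h2
    have h3 := hcon' i h1 h2
    have h4 := (Nat.cast_le (α := ℝ)).mpr (hstep i)
    push_cast at h4
    linarith
  have key : ∀ j : ℕ, j ≤ N →
      (1 + φ/2)^j ≤ ({e ∈ H.edgeSet | ∀ v ∈ e, v ∈ L (j+1)}.ncard : ℝ) := by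
    intro j
    induction j with
    | zero =>
      intro _
      norm_num
      exact_mod_cast hES1
    | succ j ih =>
      intro hj
      have h1 := ih (by omega)
      have h2 := hgrow (j+1) (by omega) hj
      calc (1+φ/2)^(j+1) = (1+φ/2) * (1+φ/2)^j := by ring
        _ ≤ (1+φ/2) * ({e ∈ H.edgeSet | ∀ v ∈ e, v ∈ L (j+1)}.ncard : ℝ) :=
            mul_le_mul_of_nonneg_left h1 (by linarith)
        _ ≤ _ := h2
  have hfin1 := key N le_rfl
  have hlt := hsubB (N+1) (by push_cast; linarith)
  have hlt' : ({e ∈ H.edgeSet | ∀ v ∈ e, v ∈ L (N+1)}.ncard : ℝ) < m := by exact_mod_cast hlt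
  have hd2 : 16 * Real.logb 2 m / φ ≤ d/2 := by rw [div_le_iff₀ hφ0]; linarith
  have hnum := stmt_4_numeric m hm2 φ hφ0 hφ1 N (by linarith)
  linarith
end

section
/- Let G be a connected graph with n vertices and m ≥ 2 edges, let 0 < φ < 1/2, and let (X, Y, E') be given where X, Y are disjoint vertex sets with |X| = |Y| ≥ 1, E' ⊆ E(G) with |E'| ≤ φ|X|/4, and dist_{G∖E'}(X,Y) ≥ d for some d ≥ (32 log₂ m)/φ. Then there exists a cut (X', Y') of G with X ⊆ X', Y ⊆ Y', and |E_G(X',Y')| ≤ φ·min(|E_G(X')|, |E_G(Y')|). -/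
set_option linter.unusedSectionVars false
set_option maxHeartbeats 1000000

open SimpleGraph Finset

section AuxDefs
variable {V : Type*} [Fintype V] [DecidableEq V] (H : SimpleGraph V) [DecidableRel H.Adj]

/-- Ball of radius `i` around `A` in `H`. -/
def gBall (A : Finset V) : ℕ → Finset V
  | 0 => A
  | (i+1) => gBall A i ∪ Finset.univ.filter (fun v => ∃ u ∈ gBall A i, H.Adj u v)

lemma gBall_mono_succ (A : Finset V) (i : ℕ) : gBall H A i ⊆ gBall H A (i+1) := by
  intro v hv; simp [gBall, hv]

lemma subset_gBall (A : Finset V) (i : ℕ) : A ⊆ gBall H A i := by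
  induction i with
  | zero => simp [gBall]
  | succ i ih => exact ih.trans (gBall_mono_succ H A i)

lemma adj_mem_gBall_succ {A : Finset V} {i : ℕ} {u v : V} (hu : u ∈ gBall H A i)
    (h : H.Adj u v) : v ∈ gBall H A (i+1) := by
  simp only [gBall, Finset.mem_union, Finset.mem_filter, Finset.mem_univ, true_and]
  exact Or.inr ⟨u, hu, h⟩

lemma exists_walk_of_mem_gBall {A : Finset V} {i : ℕ} {v : V} (hv : v ∈ gBall H A i) :
    ∃ a ∈ A, ∃ w : H.Walk a v, w.length ≤ i := by
  induction i generalizing v with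
  | zero => exact ⟨v, hv, Walk.nil, by simp⟩
  | succ i ih =>
    simp only [gBall, Finset.mem_union, Finset.mem_filter, Finset.mem_univ, true_and] at hv
    rcases hv with hv | ⟨u, hu, hadj⟩
    · obtain ⟨a, ha, w, hw⟩ := ih hv
      exact ⟨a, ha, w, hw.trans (Nat.le_succ i)⟩
    · obtain ⟨a, ha, w, hw⟩ := ih hu
      exact ⟨a, ha, w.concat hadj, by simp [Walk.length_concat]; omega⟩

/-- Edges of `H` inside `S`. -/
def inE (S : Finset V) : Finset (Sym2 V) := H.edgeFinset.filter (· ∈ S.sym2)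

/-- Edges of `H` leaving `S`. -/
def bndE (S : Finset V) : Finset (Sym2 V) :=
  H.edgeFinset.filter (fun e => ∃ u ∈ S, ∃ v ∉ S, e = s(u,v))

lemma inE_mono {S T : Finset V} (h : S ⊆ T) : inE H S ⊆ inE H T := by
  intro e he
  simp only [inE, Finset.mem_filter] at he ⊢
  exact ⟨he.1, Finset.sym2_mono h he.2⟩

lemma inE_bnd_disjoint (S : Finset V) : Disjoint (inE H S) (bndE H S) := by
  rw [Finset.disjoint_left]
  intro e heS heB
  simp only [inE, bndE, Finset.mem_filter] at heS heB
  obtain ⟨u, hu, v, hv, rfl⟩ := heB.2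
  rw [Finset.mk_mem_sym2_iff] at heS
  exact hv heS.2.2

lemma grow_card (A : Finset V) (i : ℕ) :
    (inE H (gBall H A i)).card + (bndE H (gBall H A i)).card ≤
      (inE H (gBall H A (i+1))).card := by
  rw [← Finset.card_union_of_disjoint (inE_bnd_disjoint H _)]
  apply Finset.card_le_card
  intro e he
  simp only [Finset.mem_union] at he
  rcases he with he | he
  · exact inE_mono H (gBall_mono_succ H A i) he
  · simp only [bndE, inE, Finset.mem_filter] at he ⊢
    obtain ⟨hmem, u, hu, v, hv, rfl⟩ := he
    have hadj : H.Adj u v := by rwa [SimpleGraph.mem_edgeFinset, SimpleGraph.mem_edgeSet] at hmem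
    refine ⟨hmem, ?_⟩
    rw [Finset.mk_mem_sym2_iff]
    exact ⟨gBall_mono_succ H A i hu, adj_mem_gBall_succ H hu hadj⟩

end AuxDefs

section AuxCut
variable {V : Type*} [Fintype V] [DecidableEq V]

lemma cut_filter_comm (F : Finset (Sym2 V)) (P Q : Finset V) :
    F.filter (fun e => ∃ u ∈ P, ∃ v ∈ Q, e = s(u,v)) =
      F.filter (fun e => ∃ u ∈ Q, ∃ v ∈ P, e = s(u,v)) := by
  apply Finset.filter_congr
  intro e _
  constructor
  · rintro ⟨u, hu, v, hv, rfl⟩; exact ⟨v, hv, u, hu, Sym2.eq_swap⟩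
  · rintro ⟨u, hu, v, hv, rfl⟩; exact ⟨v, hv, u, hu, Sym2.eq_swap⟩

lemma counting (G : SimpleGraph V) [DecidableRel G.Adj]
    (hnbr : ∀ v : V, ∃ w, G.Adj v w) (A T : Finset V) (hAT : A ⊆ T) :
    A.card ≤ 2 * ((G.edgeFinset.filter (· ∈ T.sym2)).card +
      (G.edgeFinset.filter (fun e => ∃ u ∈ T, ∃ v ∈ Tᶜ, e = s(u,v))).card) := by
  classical
  set f : V → V := fun v => (hnbr v).choose with hf
  have hfadj : ∀ v, G.Adj v (f v) := fun v => (hnbr v).choose_spec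
  set g : V → Sym2 V := fun v => s(v, f v) with hg
  have himg : A.image g ⊆ (G.edgeFinset.filter (· ∈ T.sym2)) ∪
      (G.edgeFinset.filter (fun e => ∃ u ∈ T, ∃ v ∈ Tᶜ, e = s(u,v))) := by
    intro e he
    obtain ⟨x, hx, rfl⟩ := Finset.mem_image.mp he
    have hxe : g x ∈ G.edgeFinset := by
      rw [SimpleGraph.mem_edgeFinset]; exact (hfadj x)
    by_cases hfx : f x ∈ T
    · apply Finset.mem_union_left
      refine Finset.mem_filter.mpr ⟨hxe, ?_⟩
      rw [hg]; rw [Finset.mk_mem_sym2_iff]; exact ⟨hAT hx, hfx⟩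
    · apply Finset.mem_union_right
      exact Finset.mem_filter.mpr ⟨hxe, x, hAT hx, f x, Finset.mem_compl.mpr hfx, rfl⟩
  have hcard : A.card ≤ 2 * (A.image g).card := by
    apply Finset.card_le_mul_card_image
    intro e he
    induction e with
    | h u w =>
      have : A.filter (fun x => g x = s(u, w)) ⊆ {u, w} := by
        intro x hx
        have := (Finset.mem_filter.mp hx).2
        rw [hg] at this
        simp only [Sym2.eq, Sym2.rel_iff', Prod.mk.injEq, Prod.swap_prod_mk] at this
        rcases this with ⟨rfl, _⟩ | ⟨rfl, _⟩ <;> simp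
      calc (A.filter (fun x => g x = s(u, w))).card ≤ ({u, w} : Finset V).card :=
            Finset.card_le_card this
        _ ≤ 2 := Finset.card_insert_le _ _ |>.trans (by simp)
  calc A.card ≤ 2 * (A.image g).card := hcard
    _ ≤ 2 * ((G.edgeFinset.filter (· ∈ T.sym2)) ∪
        (G.edgeFinset.filter (fun e => ∃ u ∈ T, ∃ v ∈ Tᶜ, e = s(u,v)))).card :=
        Nat.mul_le_mul_left 2 (Finset.card_le_card himg)
    _ ≤ _ := Nat.mul_le_mul_left 2 (Finset.card_union_le _ _)

lemma cut_side (G : SimpleGraph V) [DecidableRel G.Adj]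
    (hnbr : ∀ v : V, ∃ w, G.Adj v w)
    (φ : ℝ) (hφ0 : 0 < φ) (hφ1 : φ < 1 / 2)
    (X Y : Finset V) (hcard : X.card = Y.card)
    (E' : Finset (Sym2 V)) (hE'card : (E'.card : ℝ) ≤ φ * X.card / 4)
    (H : SimpleGraph V) [DecidableRel H.Adj]
    (hHG : H.edgeFinset ⊆ G.edgeFinset)
    (hGH : ∀ e ∈ G.edgeFinset, e ∉ E' → e ∈ H.edgeFinset)
    (S : Finset V) (hXS : X ⊆ S) (hYS : Y ⊆ Sᶜ)
    (hb1 : ((bndE H S).card : ℝ) ≤ φ / 4 * ((inE H S).card : ℝ))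
    (hb2 : ((bndE H S).card : ℝ) ≤ φ / 4 * ((inE H Sᶜ).card : ℝ)) :
    ∃ X' Y' : Finset V, X' ∪ Y' = Finset.univ ∧ Disjoint X' Y' ∧ X ⊆ X' ∧ Y ⊆ Y' ∧
      ((G.edgeFinset.filter (fun e => ∃ u ∈ X', ∃ v ∈ Y', e = s(u, v))).card : ℝ) ≤
        φ * min ((G.edgeFinset.filter (· ∈ X'.sym2)).card : ℝ)
            ((G.edgeFinset.filter (· ∈ Y'.sym2)).card : ℝ) := by
  refine ⟨S, Sᶜ, Finset.union_compl S, disjoint_compl_right, hXS, hYS, ?_⟩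
  set cutG := G.edgeFinset.filter (fun e => ∃ u ∈ S, ∃ v ∈ Sᶜ, e = s(u, v)) with hcutG
  set aG := (G.edgeFinset.filter (· ∈ S.sym2)).card with haG
  set bG := (G.edgeFinset.filter (· ∈ Sᶜ.sym2)).card with hbG
  have hsub : cutG ⊆ bndE H S ∪ E' := by
    intro e he
    rw [Finset.mem_filter] at he
    obtain ⟨heG, u, hu, v, hv, rfl⟩ := he
    by_cases heE : s(u,v) ∈ E'
    · exact Finset.mem_union_right _ heE
    · refine Finset.mem_union_left _ ?_
      exact Finset.mem_filter.mpr ⟨hGH _ heG heE, u, hu, v, Finset.mem_compl.mp hv, rfl⟩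
  have hc : (cutG.card : ℝ) ≤ (bndE H S).card + E'.card := by
    have := (Finset.card_le_card hsub).trans (Finset.card_union_le _ _)
    exact_mod_cast this
  have hinS : ((inE H S).card : ℝ) ≤ aG := by
    have : inE H S ⊆ G.edgeFinset.filter (· ∈ S.sym2) := by
      intro e he
      rw [inE, Finset.mem_filter] at he
      exact Finset.mem_filter.mpr ⟨hHG he.1, he.2⟩
    exact_mod_cast Finset.card_le_card this
  have hinSc : ((inE H Sᶜ).card : ℝ) ≤ bG := by
    have : inE H Sᶜ ⊆ G.edgeFinset.filter (· ∈ Sᶜ.sym2) := by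
      intro e he
      rw [inE, Finset.mem_filter] at he
      exact Finset.mem_filter.mpr ⟨hHG he.1, he.2⟩
    exact_mod_cast Finset.card_le_card this
  have hXc : (X.card : ℝ) ≤ 2 * (aG + cutG.card) := by
    have := counting G hnbr X S hXS
    rw [← haG, ← hcutG] at this
    exact_mod_cast this
  have hYc : (X.card : ℝ) ≤ 2 * (bG + cutG.card) := by
    have h1 := counting G hnbr Y Sᶜ hYS
    rw [compl_compl] at h1
    rw [cut_filter_comm G.edgeFinset Sᶜ S, ← hcutG] at h1
    rw [hcard]
    exact_mod_cast h1
  have hb1' : ((bndE H S).card : ℝ) ≤ φ / 4 * aG := hb1.trans (by nlinarith)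
  have hb2' : ((bndE H S).card : ℝ) ≤ φ / 4 * bG := hb2.trans (by nlinarith)
  have hcnn : (0:ℝ) ≤ (cutG.card : ℝ) := Nat.cast_nonneg _
  have haGnn : (0:ℝ) ≤ (aG : ℝ) := Nat.cast_nonneg _
  have hbGnn : (0:ℝ) ≤ (bG : ℝ) := Nat.cast_nonneg _
  rcases le_total (aG : ℝ) (bG : ℝ) with hab | hab
  · rw [min_eq_left hab]
    nlinarith [hc, hE'card, hXc, hb1']
  · rw [min_eq_right hab]
    nlinarith [hc, hE'card, hYc, hb2']

end AuxCut

/-- From a distancing to a sparse cut: if `G` is connected with `m ≥ 2` edges, `0 < φ < 1/2`,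
`X, Y` are disjoint equal-cardinality nonempty vertex sets, `E'` is a set of at most `φ|X|/4`
edges such that every `X`–`Y` walk in `G ∖ E'` has length at least `d ≥ (32 log₂ m)/φ`, then
there is a cut `(X', Y')` of `G` with `X ⊆ X'`, `Y ⊆ Y'` and
`|E_G(X',Y')| ≤ φ · min(|E_G(X')|, |E_G(Y')|)`. -/
theorem stmt_5 {V : Type*} [Fintype V] [DecidableEq V] (G : SimpleGraph V)
    [DecidableRel G.Adj] (hconn : G.Connected) (hm : 2 ≤ G.edgeFinset.card)
    (φ d : ℝ) (hφ0 : 0 < φ) (hφ1 : φ < 1 / 2)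
    (hd : 32 * Real.logb 2 G.edgeFinset.card / φ ≤ d)
    (X Y : Finset V) (hXY : Disjoint X Y) (hcard : X.card = Y.card) (hX1 : 1 ≤ X.card)
    (E' : Finset (Sym2 V)) (hE'sub : E' ⊆ G.edgeFinset)
    (hE'card : (E'.card : ℝ) ≤ φ * X.card / 4)
    (hdist : ∀ x ∈ X, ∀ y ∈ Y,
      ∀ w : (G.deleteEdges (E' : Set (Sym2 V))).Walk x y, d ≤ (w.length : ℝ)) :
    ∃ X' Y' : Finset V, X' ∪ Y' = Finset.univ ∧ Disjoint X' Y' ∧ X ⊆ X' ∧ Y ⊆ Y' ∧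
      ((G.edgeFinset.filter (fun e => ∃ u ∈ X', ∃ v ∈ Y', e = s(u, v))).card : ℝ) ≤
        φ * min ((G.edgeFinset.filter (· ∈ X'.sym2)).card : ℝ)
            ((G.edgeFinset.filter (· ∈ Y'.sym2)).card : ℝ) := by
  classical
  have hm2 : (2:ℝ) ≤ (G.edgeFinset.card : ℝ) := by exact_mod_cast hm
  set mR : ℝ := (G.edgeFinset.card : ℝ) with hmR
  set H := G.deleteEdges (E' : Set (Sym2 V)) with hHdef
  haveI hdec : DecidableRel H.Adj := fun u v =>
    decidable_of_iff (G.Adj u v ∧ s(u,v) ∉ E') (by rw [hHdef]; simp)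
  -- edge set relations
  have hedge : ∀ e, e ∈ H.edgeFinset ↔ e ∈ G.edgeFinset ∧ e ∉ E' := by
    intro e
    rw [SimpleGraph.mem_edgeFinset, SimpleGraph.mem_edgeFinset, hHdef,
      SimpleGraph.edgeSet_deleteEdges]
    simp [Set.mem_diff]
  have hHG : H.edgeFinset ⊆ G.edgeFinset := fun e he => ((hedge e).mp he).1
  have hGH : ∀ e ∈ G.edgeFinset, e ∉ E' → e ∈ H.edgeFinset :=
    fun e h1 h2 => (hedge e).mpr ⟨h1, h2⟩
  -- every vertex has a neighbour
  have hnbr : ∀ v : V, ∃ w, G.Adj v w := by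
    intro v
    have h0 : 0 < G.edgeFinset.card := by omega
    obtain ⟨e, he⟩ := Finset.card_pos.mp h0
    induction e with
    | h a b =>
      have hab : G.Adj a b := by
        rwa [SimpleGraph.mem_edgeFinset, SimpleGraph.mem_edgeSet] at he
      rcases eq_or_ne v a with rfl | hva
      · exact ⟨b, hab⟩
      · obtain ⟨w⟩ := hconn.preconnected v a
        cases w with
        | nil => exact absurd rfl hva
        | cons h p => exact ⟨_, h⟩
  -- logarithmic facts
  have hlog2pos : 0 < Real.log 2 := Real.log_pos (by norm_num)
  have hlogm : Real.log 2 ≤ Real.log mR := Real.log_le_log (by norm_num) hm2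
  have hd' : 32 * (Real.log mR / Real.log 2) / φ ≤ d := by
    rw [Real.logb] at hd; exact hd
  have hdφ : 32 * Real.log mR ≤ d * φ * Real.log 2 := by
    rw [div_le_iff₀ hφ0] at hd'
    have h2 := mul_le_mul_of_nonneg_right hd' hlog2pos.le
    calc 32 * Real.log mR = 32 * (Real.log mR / Real.log 2) * Real.log 2 := by
          field_simp
      _ ≤ d * φ * Real.log 2 := h2
  have hl2b : Real.log 2 < 0.6931471808 := Real.log_two_lt_d9
  have hl2a : (0.6931471803:ℝ) < Real.log 2 := Real.log_two_gt_d9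
  have hdp : (32:ℝ) ≤ d * φ := by
    have h1 : 32 * Real.log 2 ≤ (d * φ) * Real.log 2 := by nlinarith [hdφ, hlogm]
    exact le_of_mul_le_mul_right h1 hlog2pos
  have hd0 : (0:ℝ) < d := by
    by_contra h
    push_neg at h
    nlinarith [hdp, hφ0]
  have hd64 : (64:ℝ) ≤ d := by nlinarith [hdp, hφ1, hd0]
  -- the radius
  set k : ℕ := ⌊(d-1)/2⌋₊ with hk
  have hkle : (k:ℝ) ≤ (d-1)/2 := Nat.floor_le (by linarith)
  have hkge : (d-1)/2 - 1 < (k:ℝ) := Nat.sub_one_lt_floor _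
  have hk1 : 1 ≤ k := by
    have : (1:ℝ) ≤ (k:ℝ) := by linarith
    exact_mod_cast this
  have hkd : 2*(k:ℝ) < d := by linarith
  -- walk-based separation facts
  have hdisjXY : ∀ i j : ℕ, (i:ℝ) + (j:ℝ) < d → Disjoint (gBall H X i) (gBall H Y j) := by
    intro i j hij
    rw [Finset.disjoint_left]
    intro v hvX hvY
    obtain ⟨x, hx, w1, hw1⟩ := exists_walk_of_mem_gBall H hvX
    obtain ⟨y, hy, w2, hw2⟩ := exists_walk_of_mem_gBall H hvY
    have hwd := hdist x hx y hy (w1.append w2.reverse)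
    rw [SimpleGraph.Walk.length_append, SimpleGraph.Walk.length_reverse] at hwd
    have : ((w1.length + w2.length : ℕ):ℝ) ≤ (i:ℝ) + (j:ℝ) := by
      push_cast
      have h1 : (w1.length:ℝ) ≤ i := by exact_mod_cast hw1
      have h2 : (w2.length:ℝ) ≤ j := by exact_mod_cast hw2
      linarith
    linarith
  have hYball : ∀ i : ℕ, (i:ℝ) < d → Y ⊆ (gBall H X i)ᶜ := by
    intro i hi y hy
    rw [Finset.mem_compl]
    intro hmem
    obtain ⟨x, hx, w, hw⟩ := exists_walk_of_mem_gBall H hmem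
    have hwd := hdist x hx y hy w
    have : (w.length:ℝ) ≤ i := by exact_mod_cast hw
    linarith
  have hXball : ∀ i : ℕ, (i:ℝ) < d → X ⊆ (gBall H Y i)ᶜ := by
    intro i hi x hx
    rw [Finset.mem_compl]
    intro hmem
    obtain ⟨y, hy, w, hw⟩ := exists_walk_of_mem_gBall H hmem
    have hwd := hdist x hx y hy w.reverse
    rw [SimpleGraph.Walk.length_reverse] at hwd
    have : (w.length:ℝ) ≤ i := by exact_mod_cast hw
    linarith
  -- the edge counts
  set a : ℕ → ℝ := fun i => ((inE H (gBall H X i)).card : ℝ) with ha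
  set b : ℕ → ℝ := fun i => ((inE H (gBall H Y i)).card : ℝ) with hb
  set sa : ℕ → ℝ := fun i => ((bndE H (gBall H X i)).card : ℝ) with hsa
  set sb : ℕ → ℝ := fun i => ((bndE H (gBall H Y i)).card : ℝ) with hsb
  have hgrowa : ∀ i, a i + sa i ≤ a (i+1) := by
    intro i
    have := grow_card H X i
    simp only [ha, hsa]
    exact_mod_cast this
  have hgrowb : ∀ i, b i + sb i ≤ b (i+1) := by
    intro i
    have := grow_card H Y i
    simp only [hb, hsb]
    exact_mod_cast this
  have hann : ∀ i, 0 ≤ a i := fun i => Nat.cast_nonneg _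
  have hbnn : ∀ i, 0 ≤ b i := fun i => Nat.cast_nonneg _
  have hsann : ∀ i, 0 ≤ sa i := fun i => Nat.cast_nonneg _
  have hsbnn : ∀ i, 0 ≤ sb i := fun i => Nat.cast_nonneg _
  have ham : ∀ i, a i ≤ mR := by
    intro i
    simp only [ha]
    rw [hmR]
    have : inE H (gBall H X i) ⊆ G.edgeFinset :=
      (Finset.filter_subset _ _).trans hHG
    exact_mod_cast Finset.card_le_card this
  -- the key existence of a sparse level
  have key : ∃ i, i < k ∧ (sa i ≤ φ/4 * min (a i) (b i) ∨ sb i ≤ φ/4 * min (a i) (b i)) := by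
    by_contra hno
    push_neg at hno
    have hno' : ∀ i, i < k → φ/4 * min (a i) (b i) < sa i ∧ φ/4 * min (a i) (b i) < sb i := by
      intro i hik
      exact hno i hik
    have hgrow : ∀ i, i + 1 ≤ k → (1+φ/4)^i ≤ min (a (i+1)) (b (i+1)) := by
      intro i
      induction i with
      | zero =>
        intro h1
        obtain ⟨hA, hB⟩ := hno' 0 (by omega)
        have hminnn : 0 ≤ min (a 0) (b 0) := le_min (hann 0) (hbnn 0)
        have hsa1 : (1:ℝ) ≤ sa 0 := by
          have h0 : (0:ℝ) < sa 0 := lt_of_le_of_lt (by nlinarith) hA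
          simp only [hsa] at h0 ⊢
          have : 0 < (bndE H (gBall H X 0)).card := by exact_mod_cast h0
          exact_mod_cast this
        have hsb1 : (1:ℝ) ≤ sb 0 := by
          have h0 : (0:ℝ) < sb 0 := lt_of_le_of_lt (by nlinarith) hB
          simp only [hsb] at h0 ⊢
          have : 0 < (bndE H (gBall H Y 0)).card := by exact_mod_cast h0
          exact_mod_cast this
        have := hgrowa 0
        have := hgrowb 0
        simp only [pow_zero]
        exact le_min (by linarith [hann 0]) (by linarith [hbnn 0])
      | succ i ih =>
        intro h2
        have hmin := ih (by omega)
        obtain ⟨hA, hB⟩ := hno' (i+1) (by omega)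
        have h1 := hgrowa (i+1)
        have h2' := hgrowb (i+1)
        have hminle1 : min (a (i+1)) (b (i+1)) ≤ a (i+1) := min_le_left _ _
        have hminle2 : min (a (i+1)) (b (i+1)) ≤ b (i+1) := min_le_right _ _
        have hstep : (1+φ/4) * min (a (i+1)) (b (i+1)) ≤ min (a (i+2)) (b (i+2)) := by
          apply le_min
          · nlinarith
          · nlinarith
        calc (1+φ/4)^(i+1) = (1+φ/4) * (1+φ/4)^i := by ring
          _ ≤ (1+φ/4) * min (a (i+1)) (b (i+1)) :=
              mul_le_mul_of_nonneg_left hmin (by linarith)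
          _ ≤ _ := hstep
    have hfin := hgrow (k-1) (by omega)
    rw [Nat.sub_add_cancel hk1] at hfin
    -- min at level k is at most mR, but the power exceeds mR
    have hminm : min (a k) (b k) ≤ mR := (min_le_left _ _).trans (ham k)
    -- power bound
    have hx0 : (0:ℝ) < 1 + φ/4 := by linarith
    have hloglb : 2*φ/9 ≤ Real.log (1+φ/4) := by
      have hinv : (0:ℝ) < (1+φ/4)⁻¹ := by positivity
      have h5 := Real.log_le_sub_one_of_pos hinv
      rw [Real.log_inv] at h5
      -- log(1+φ/4) ≥ 1 - (1+φ/4)⁻¹ = (φ/4)/(1+φ/4)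
      have heq : 1 - (1+φ/4)⁻¹ = (φ/4)/(1+φ/4) := by field_simp; ring
      have h6 : (φ/4)/(1+φ/4) ≤ Real.log (1+φ/4) := by linarith [heq ▸ (by linarith : 1 - (1+φ/4)⁻¹ ≤ Real.log (1+φ/4))]
      have h7 : 2*φ/9 ≤ (φ/4)/(1+φ/4) := by
        rw [le_div_iff₀ (by linarith)]
        nlinarith
      linarith
    have hpow : mR < (1+φ/4)^(k-1) := by
      have hm0 : (0:ℝ) < mR := by linarith
      rw [← Real.log_lt_log_iff hm0 (by positivity)]
      rw [Real.log_pow]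
      have hkcast : ((k-1:ℕ):ℝ) = (k:ℝ) - 1 := by
        rw [Nat.cast_sub hk1]; norm_num
      rw [hkcast]
      have hk1' : d/2 - 5/2 ≤ (k:ℝ) - 1 := by linarith
      have h4 : (d/2 - 5/2) * (2*φ/9) ≤ ((k:ℝ)-1) * Real.log (1+φ/4) := by
        apply mul_le_mul hk1' hloglb (by linarith) (by linarith)
      have h5 : 32 * Real.log mR ≤ (d*φ) * 0.6931471808 := by
        have : d * φ * Real.log 2 ≤ (d*φ) * 0.6931471808 := by
          apply mul_le_mul_of_nonneg_left hl2b.le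
          nlinarith
        linarith
      have h6 : (d/2 - 5/2) * (2*φ/9) = d*φ/9 - 5*φ/9 := by ring
      nlinarith [hlogm, hl2a, hφ0, hφ1]
    linarith
  -- extract the sparse level and build the cut
  obtain ⟨i, hik, hstop⟩ := key
  have hid : (i:ℝ) < d := by
    have : (i:ℝ) < (k:ℝ) := by exact_mod_cast hik
    linarith
  have h2id : (i:ℝ) + (i:ℝ) < d := by
    have : (i:ℝ) < (k:ℝ) := by exact_mod_cast hik
    linarith
  have hdisj := hdisjXY i i h2id
  have hφ4 : (0:ℝ) ≤ φ/4 := by linarith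
  rcases hstop with hstop | hstop
  · -- X side is sparse
    have hb1 : ((bndE H (gBall H X i)).card : ℝ) ≤ φ/4 * ((inE H (gBall H X i)).card : ℝ) := by
      have := hstop.trans (mul_le_mul_of_nonneg_left (min_le_left _ _) hφ4)
      simpa only [hsa, ha] using this
    have hb2 : ((bndE H (gBall H X i)).card : ℝ) ≤
        φ/4 * ((inE H (gBall H X i)ᶜ).card : ℝ) := by
      have hsubc : gBall H Y i ⊆ (gBall H X i)ᶜ := by
        intro v hv
        rw [Finset.mem_compl]
        exact fun hvX => (Finset.disjoint_left.mp hdisj hvX) hv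
      have hmono : ((inE H (gBall H Y i)).card : ℝ) ≤ ((inE H (gBall H X i)ᶜ).card : ℝ) := by
        exact_mod_cast Finset.card_le_card (inE_mono H hsubc)
      have h9 := hstop.trans (mul_le_mul_of_nonneg_left (min_le_right _ _) hφ4)
      simp only [hsa, hb] at h9
      nlinarith [h9, hmono, hφ4]
    exact cut_side G hnbr φ hφ0 hφ1 X Y hcard E' hE'card H hHG hGH
      (gBall H X i) (subset_gBall H X i) (hYball i hid) hb1 hb2
  · -- Y side is sparse
    have hb1 : ((bndE H (gBall H Y i)).card : ℝ) ≤ φ/4 * ((inE H (gBall H Y i)).card : ℝ) := by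
      have := hstop.trans (mul_le_mul_of_nonneg_left (min_le_right _ _) hφ4)
      simpa only [hsb, hb] using this
    have hb2 : ((bndE H (gBall H Y i)).card : ℝ) ≤
        φ/4 * ((inE H (gBall H Y i)ᶜ).card : ℝ) := by
      have hsubc : gBall H X i ⊆ (gBall H Y i)ᶜ := by
        intro v hv
        rw [Finset.mem_compl]
        exact fun hvY => (Finset.disjoint_left.mp hdisj hv) hvY
      have hmono : ((inE H (gBall H X i)).card : ℝ) ≤ ((inE H (gBall H Y i)ᶜ).card : ℝ) := by
        exact_mod_cast Finset.card_le_card (inE_mono H hsubc)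
      have h9 := hstop.trans (mul_le_mul_of_nonneg_left (min_le_left _ _) hφ4)
      simp only [hsb, ha] at h9
      nlinarith [h9, hmono, hφ4]
    have hE'card' : (E'.card : ℝ) ≤ φ * Y.card / 4 := by rw [← hcard]; exact hE'card
    obtain ⟨X', Y', hu, hdj, hYX', hXY', hineq⟩ :=
      cut_side G hnbr φ hφ0 hφ1 Y X hcard.symm E' hE'card' H hHG hGH
        (gBall H Y i) (subset_gBall H Y i) (hXball i hid) hb1 hb2
    refine ⟨Y', X', by rw [Finset.union_comm]; exact hu, hdj.symm, hXY', hYX', ?_⟩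
    rw [cut_filter_comm G.edgeFinset Y' X', min_comm]
    exact hineq
end

section
/- Consider a Distanced Matching Game with parameters n > 0, 0 < δ < 1/4 and d, such that d ≥ 2^{4/δ} and n^δ ≥ 2^{14}·(log₂ n)/δ². Then the number of iterations in the game is at most n^{8δ}, regardless of the strategies of the two players. -/
set_option linter.unusedSectionVars false

open SimpleGraph


open SimpleGraph Finset

section DMG
variable {V : Type*} [Fintype V] [DecidableEq V]

/-- ball of radius `r` around `v` in `H` (vertices reachable by a walk of length ≤ r). -/
noncomputable def mball (H : SimpleGraph V) (v : V) (r : ℕ) : Finset V :=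
  @Finset.filter _ (fun x => ∃ w : H.Walk v x, w.length ≤ r) (Classical.decPred _) Finset.univ

lemma mem_mball {H : SimpleGraph V} {v x : V} {r : ℕ} :
    x ∈ mball H v r ↔ ∃ w : H.Walk v x, w.length ≤ r := by
  simp [mball]

lemma self_mem_mball (H : SimpleGraph V) (v : V) (r : ℕ) : v ∈ mball H v r :=
  mem_mball.2 ⟨Walk.nil, by simp⟩

lemma mball_card_pos (H : SimpleGraph V) (v : V) (r : ℕ) : 0 < (mball H v r).card :=
  Finset.card_pos.2 ⟨v, self_mem_mball H v r⟩

lemma mball_card_le (H : SimpleGraph V) (v : V) (r : ℕ) :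
    (mball H v r).card ≤ Fintype.card V :=
  Finset.card_le_univ _

lemma mball_mono_graph {H H' : SimpleGraph V} (h : H ≤ H') (v : V) (r : ℕ) :
    mball H v r ⊆ mball H' v r := by
  intro x hx
  rcases mem_mball.1 hx with ⟨w, hw⟩
  exact mem_mball.2 ⟨w.mapLe h, by rwa [Walk.length_map]⟩

lemma mball_mono_radius (H : SimpleGraph V) (v : V) {r r' : ℕ} (h : r ≤ r') :
    mball H v r ⊆ mball H v r' := by
  intro x hx
  rcases mem_mball.1 hx with ⟨w, hw⟩
  exact mem_mball.2 ⟨w, hw.trans h⟩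

lemma mball_bot (v : V) (r : ℕ) : mball (⊥ : SimpleGraph V) v r = {v} := by
  ext x
  simp only [mem_mball, Finset.mem_singleton]
  constructor
  · rintro ⟨w, -⟩
    cases w with
    | nil => rfl
    | cons h _ => exact absurd h (by simp)
  · rintro rfl; exact ⟨Walk.nil, by simp⟩

/-- growth: if `y–x` is an edge of `H'`, `H ≤ H'`, then the `r+1`-ball of `y` in `H'`
contains the `r`-ball of `x` in `H`. -/
lemma mball_growth {H H' : SimpleGraph V} (h : H ≤ H') {x y : V} (hadj : H'.Adj y x)
    {r r' : ℕ} (hr : r + 1 ≤ r') :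
    mball H x r ⊆ mball H' y r' := by
  intro u hu
  rcases mem_mball.1 hu with ⟨w, hw⟩
  refine mem_mball.2 ⟨Walk.cons hadj (w.mapLe h), ?_⟩
  simp only [Walk.length_cons, Walk.length_map]
  omega

end DMG

lemma two_rpow_le_one_add {x : ℝ} (h0 : 0 ≤ x) (h1 : x ≤ 1) : (2:ℝ) ^ x ≤ 1 + x := by
  have hconv := convexOn_exp.2 (Set.mem_univ (0:ℝ)) (Set.mem_univ (Real.log 2))
    (by linarith : (0:ℝ) ≤ 1 - x) h0 (by ring)
  have h2 : (2:ℝ) ^ x = Real.exp (x * Real.log 2) := by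
    rw [Real.rpow_def_of_pos (by norm_num), mul_comm]
  rw [h2]
  have : (1 - x) • (0:ℝ) + x • Real.log 2 = x * Real.log 2 := by simp
  rw [this] at hconv
  calc Real.exp (x * Real.log 2) ≤ (1 - x) * Real.exp 0 + x * Real.exp (Real.log 2) := hconv
    _ = 1 + x := by rw [Real.exp_zero, Real.exp_log (by norm_num)]; ring

lemma logb_gain {x c1 c3 : ℝ} (h0 : 0 ≤ x) (h1 : x ≤ 1) (hc1 : 1 ≤ c1)
    (h : (1 + x) * c1 ≤ c3) : Real.logb 2 c1 + x ≤ Real.logb 2 c3 := by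
  have hc1' : (0:ℝ) < c1 := by linarith
  have hc3 : (0:ℝ) < c3 := by nlinarith
  have hx : x ≤ Real.logb 2 (1 + x) := by
    rw [Real.le_logb_iff_rpow_le (by norm_num) (by linarith)]
    exact two_rpow_le_one_add h0 h1
  have h13 : Real.logb 2 ((1+x) * c1) ≤ Real.logb 2 c3 :=
    Real.logb_le_logb_of_le (by norm_num) (by nlinarith) h
  rw [Real.logb_mul (by positivity) (by positivity)] at h13
  linarith

lemma prod_ratio (c : ℕ → ℝ) (hc : ∀ j, 0 < c j) (J : ℕ) :
    ∏ j ∈ Finset.range J, c (j+1) / c j = c J / c 0 := by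
  induction J with
  | zero => simp [div_self (hc 0).ne']
  | succ J ih =>
    rw [Finset.prod_range_succ, ih, div_mul_div_comm, mul_comm (c 0) (c J),
      mul_div_mul_left _ _ (hc J).ne']

lemma unstable_count {N δ : ℝ} (hN : 2 ≤ N) (hδ : 0 < δ) (c : ℕ → ℝ)
    (hc1 : ∀ j, 1 ≤ c j) (hmono : ∀ j, c j ≤ c (j+1)) (J : ℕ) (hcap : c J ≤ N) :
    ((Finset.range J).filter (fun j => N ^ δ * c j ≤ c (j+1))).card ≤ ⌊1/δ⌋₊ := by
  set s := (Finset.range J).filter (fun j => N ^ δ * c j ≤ c (j+1)) with hs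
  have hcpos : ∀ j, (0:ℝ) < c j := fun j => lt_of_lt_of_le one_pos (hc1 j)
  have hρ1 : ∀ j, (1:ℝ) ≤ c (j+1) / c j := fun j =>
    (one_le_div (hcpos j)).2 (hmono j)
  have hsub : s ⊆ Finset.range J := Finset.filter_subset _ _
  have key : (N ^ δ) ^ s.card ≤ N := by
    calc (N ^ δ) ^ s.card = ∏ _j ∈ s, N ^ δ := by rw [Finset.prod_const]
      _ ≤ ∏ j ∈ s, c (j+1) / c j := by
          refine Finset.prod_le_prod (fun j _ => Real.rpow_nonneg (by linarith) δ) (fun j hj => ?_)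
          have := (Finset.mem_filter.1 hj).2
          rw [le_div_iff₀ (hcpos j)]
          linarith
      _ ≤ ∏ j ∈ Finset.range J, c (j+1) / c j := by
          rw [← Finset.prod_sdiff hsub]
          have h1 : (1:ℝ) ≤ ∏ j ∈ Finset.range J \ s, c (j+1) / c j := by
            calc (1:ℝ) = ∏ _j ∈ Finset.range J \ s, (1:ℝ) := by simp
              _ ≤ _ := Finset.prod_le_prod (by intros; norm_num) (fun j _ => hρ1 j)
          have h2 : (0:ℝ) ≤ ∏ j ∈ s, c (j+1) / c j :=
            Finset.prod_nonneg (fun j _ => (div_pos (hcpos _) (hcpos _)).le)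
          nlinarith
      _ = c J / c 0 := prod_ratio c hcpos J
      _ ≤ N := by
          rw [div_le_iff₀ (hcpos 0)]
          nlinarith [hc1 0, hcpos J]
  have hN1 : (1:ℝ) < N := by linarith
  have key2 : N ^ (δ * s.card) ≤ N ^ (1:ℝ) := by
    rw [Real.rpow_mul (by linarith), Real.rpow_natCast, Real.rpow_one]
    exact key
  have := (Real.rpow_le_rpow_left_iff hN1).1 key2
  exact Nat.le_floor (by rw [le_div_iff₀ hδ]; linarith)
open SimpleGraph Finset
section DMG2
variable {V : Type*} [Fintype V] [DecidableEq V]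

lemma deleteEdges_mono_left {H H' : SimpleGraph V} (h : H ≤ H') (s : Set (Sym2 V)) :
    H.deleteEdges s ≤ H'.deleteEdges s := by
  intro v w hvw
  rw [deleteEdges_adj] at hvw ⊢
  exact ⟨h hvw.1, hvw.2⟩

end DMG2

section DMG3
variable {V : Type*} [Fintype V] [DecidableEq V]

lemma mball_disj {H : SimpleGraph V} {a b : V} {d : ℝ}
    (hfar : ∀ w : H.Walk a b, d ≤ (w.length : ℝ)) {rj rk : ℕ}
    (h : ((rj + rk : ℕ) : ℝ) < d) : Disjoint (mball H a rj) (mball H b rk) := by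
  rw [Finset.disjoint_left]
  intro x hx hx'
  obtain ⟨w1, h1⟩ := mem_mball.1 hx
  obtain ⟨w2, h2⟩ := mem_mball.1 hx'
  have hw := hfar (w1.append w2.reverse)
  rw [Walk.length_append, Walk.length_reverse] at hw
  have hle : ((w1.length + w2.length : ℕ) : ℝ) ≤ ((rj + rk : ℕ) : ℝ) := by
    exact_mod_cast Nat.add_le_add h1 h2
  push_cast at hw hle h
  linarith

lemma mball_card_growth {H H' : SimpleGraph V} (h : H ≤ H') {x y : V} (hadj : H'.Adj y x)
    {rj rk : ℕ} (hr : rj + 1 ≤ rk) (hdisj : Disjoint (mball H x rj) (mball H y rk)) :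
    (mball H y rk).card + (mball H x rj).card ≤ (mball H' y rk).card := by
  have h1 : mball H y rk ∪ mball H x rj ⊆ mball H' y rk :=
    Finset.union_subset (mball_mono_graph h y rk) (mball_growth h hadj hr)
  calc (mball H y rk).card + (mball H x rj).card
      = (mball H y rk ∪ mball H x rj).card :=
        (Finset.card_union_of_disjoint hdisj.symm).symm
    _ ≤ _ := Finset.card_le_card h1

end DMG3

set_option maxHeartbeats 1000000 in
/-- Bound on the number of iterations of the Distanced Matching Game: on a vertex set of size
`n`, with parameters `0 < δ < 1/4` and `d ≥ 2^{4/δ}`, and `n^δ ≥ 2¹⁴·(log₂ n)/δ²`, any valid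
transcript of the game (starting from the empty graph; in each round `i < z` the distancing
player produces a `(δ,d)`-distancing `(Aᵢ, Bᵢ, E'ᵢ)` of the current graph and the matching
player answers with a matching `Mᵢ ⊆ Aᵢ × Bᵢ` of size at least `|Aᵢ|/8` avoiding `E'ᵢ`, whose
edges are then added to the graph) has length `z ≤ n^{8δ}`. -/
theorem stmt_16 {V : Type*} [Fintype V] [DecidableEq V]
    (n : ℕ) (hn : n = Fintype.card V) (hn0 : 0 < n)
    (δ d : ℝ) (hδ0 : 0 < δ) (hδ1 : δ < 1 / 4)
    (hd : (2 : ℝ) ^ (4 / δ) ≤ d)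
    (hnδ : 2 ^ 14 * Real.logb 2 n / δ ^ 2 ≤ (n : ℝ) ^ δ)
    (z : ℕ)
    (G : ℕ → SimpleGraph V) (hG0 : G 0 = ⊥)
    (A B : ℕ → Finset V) (E' : ℕ → Finset (Sym2 V)) (M : ℕ → Finset (V × V))
    (hdisj : ∀ i < z, Disjoint (A i) (B i))
    (hcardAB : ∀ i < z, (A i).card = (B i).card)
    (hlarge : ∀ i < z, (n : ℝ) ^ (1 - δ) ≤ ((A i).card : ℝ))
    (hE'sub : ∀ i < z, (E' i : Set (Sym2 V)) ⊆ (G i).edgeSet)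
    (hE'card : ∀ i < z, ((E' i).card : ℝ) ≤ ((A i).card : ℝ) / 16)
    (hfar : ∀ i < z, ∀ a ∈ A i, ∀ b ∈ B i,
      ∀ w : ((G i).deleteEdges (E' i : Set (Sym2 V))).Walk a b, d ≤ (w.length : ℝ))
    (hMsub : ∀ i < z, M i ⊆ (A i) ×ˢ (B i))
    (hMinj1 : ∀ i < z, Set.InjOn Prod.fst (M i : Set (V × V)))
    (hMinj2 : ∀ i < z, Set.InjOn Prod.snd (M i : Set (V × V)))
    (hMcard : ∀ i < z, (A i).card ≤ 8 * (M i).card)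
    (hMnotE' : ∀ i < z, ∀ p ∈ M i, s((p : V × V).1, p.2) ∉ E' i)
    (hGsucc : ∀ i < z,
      G (i + 1) = G i ⊔ SimpleGraph.fromEdgeSet {e | ∃ p ∈ M i, e = s((p : V × V).1, p.2)}) :
    (z : ℝ) ≤ (n : ℝ) ^ (8 * δ) := by
  -- basic positivity facts
  have hδ4 : δ < 1 := by linarith
  have hd1 : (1 : ℝ) < d := by
    have : (1:ℝ) < (2:ℝ) ^ (4 / δ) := by
      have h40 : 0 < 4 / δ := by positivity
      calc (1:ℝ) = (2:ℝ) ^ (0:ℝ) := by rw [Real.rpow_zero]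
        _ < (2:ℝ) ^ (4/δ) := Real.rpow_lt_rpow_left_iff (by norm_num) |>.2 h40
    linarith
  -- the case n = 1
  rcases lt_or_ge n 2 with hn2 | hn2
  · have hn1 : n = 1 := by omega
    have hz : z = 0 := by
      by_contra hz0
      have h0 : 0 < z := Nat.pos_of_ne_zero hz0
      have hA1 : (1 : ℝ) ≤ ((A 0).card : ℝ) := by
        have := hlarge 0 h0
        rw [hn1] at this
        simpa using this
      have hA : 1 ≤ (A 0).card := by exact_mod_cast hA1
      have hB : 1 ≤ (B 0).card := by rw [← hcardAB 0 h0]; exact hA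
      have hcard : (A 0).card + (B 0).card ≤ Fintype.card V :=
        (Finset.card_union_of_disjoint (hdisj 0 h0)) ▸ Finset.card_le_univ _
      omega
    rw [hz]
    push_cast
    positivity
  -- main case : n ≥ 2
  have hN2 : (2:ℝ) ≤ (n:ℝ) := by exact_mod_cast hn2
  have hN1 : (1:ℝ) ≤ (n:ℝ) := by linarith
  have hN0 : (0:ℝ) < (n:ℝ) := by linarith
  set P : ℝ := (n:ℝ) ^ δ with hP
  have hP1 : 1 ≤ P := Real.one_le_rpow hN1 hδ0.le
  have hP0 : 0 < P := by linarith
  set L : ℝ := Real.logb 2 n with hL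
  have hL0 : 0 ≤ L := Real.logb_nonneg (by norm_num) hN1
  set K : ℕ := ⌊1/δ⌋₊ with hK
  set J : ℕ := 2 * K + 1 with hJ
  have hKδ : (K : ℝ) ≤ 1/δ := Nat.floor_le (by positivity)
  have hδinv : 1 ≤ 1/δ := by rw [le_div_iff₀ hδ0]; linarith
  have hJδ : ((J : ℝ) + 1) ≤ 4/δ := by
    have h1 : ((J:ℝ)+1) = 2*(K:ℝ)+2 := by push_cast [hJ]; ring
    have h4 : (4:ℝ)/δ = 4*(1/δ) := by ring
    rw [h1]
    linarith [hKδ, hδinv]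
  -- radii
  set r : ℕ → ℕ := fun j => 2 ^ j - 1 with hr
  have hrmono : ∀ j, r j ≤ r (j+1) := by
    intro j
    simp only [hr]
    have := Nat.one_le_two_pow (n := j)
    have := Nat.pow_le_pow_right (by norm_num : 1 ≤ 2) (Nat.le_succ j)
    omega
  have hrsucc : ∀ j, r j + 1 ≤ r (j+1) := by
    intro j
    simp only [hr, pow_succ]
    have := Nat.one_le_two_pow (n := j)
    omega
  have hrd : ∀ j ≤ J, ∀ k ≤ J, ((r j + r k : ℕ) : ℝ) < d := by
    intro j hj k hk
    have hjr : r j + r k < 2 ^ (J + 1) := by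
      have h1 : r j ≤ 2 ^ J - 1 := by
        simp only [hr]; exact Nat.sub_le_sub_right (Nat.pow_le_pow_right (by norm_num) hj) 1
      have h2 : r k ≤ 2 ^ J - 1 := by
        simp only [hr]; exact Nat.sub_le_sub_right (Nat.pow_le_pow_right (by norm_num) hk) 1
      have h3 : 1 ≤ 2 ^ J := Nat.one_le_two_pow
      have h4 : 2 ^ (J + 1) = 2 * 2 ^ J := by ring
      omega
    have hcast : ((r j + r k : ℕ) : ℝ) < ((2:ℝ)) ^ ((J:ℝ) + 1) := by
      have : ((r j + r k : ℕ) : ℝ) < ((2 ^ (J+1) : ℕ) : ℝ) := by exact_mod_cast hjr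
      calc ((r j + r k : ℕ) : ℝ) < ((2 ^ (J+1) : ℕ) : ℝ) := this
        _ = (2:ℝ) ^ ((J : ℝ) + 1) := by
            push_cast
            rw [← Real.rpow_natCast 2 (J+1)]
            push_cast
            ring_nf
    have h2d : ((2:ℝ)) ^ ((J:ℝ) + 1) ≤ d := by
      calc ((2:ℝ)) ^ ((J:ℝ) + 1) ≤ (2:ℝ) ^ (4/δ) :=
            (Real.rpow_le_rpow_left_iff (by norm_num)).2 hJδ
        _ ≤ d := hd
    linarith
  -- cumulative deleted edge set and pruned graphs
  set W : Finset (Sym2 V) := (Finset.range z).biUnion E' with hW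
  set Gh : ℕ → SimpleGraph V := fun i => (G i).deleteEdges (W : Set (Sym2 V)) with hGh
  have hGmono : ∀ j ≤ z, ∀ i ≤ j, G i ≤ G j := by
    intro j
    induction j with
    | zero =>
      intro _ i hi
      have : i = 0 := Nat.le_zero.1 hi
      rw [this]
    | succ j ih =>
      intro hjz i hi
      rcases Nat.lt_or_ge i (j+1) with h | h
      · calc G i ≤ G j := ih (by omega) i (by omega)
          _ ≤ G (j+1) := by rw [hGsucc j (by omega)]; exact le_sup_left
      · have : i = j + 1 := by omega
        rw [this]
  have hGhmono : ∀ i < z, Gh i ≤ Gh (i+1) := by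
    intro i hi
    exact deleteEdges_mono_left (hGmono (i+1) (by omega) i (by omega)) _
  have hGhfar : ∀ i < z, ∀ a ∈ A i, ∀ b ∈ B i, ∀ w : (Gh i).Walk a b, d ≤ (w.length : ℝ) := by
    intro i hi a ha b hb w
    have hle : Gh i ≤ (G i).deleteEdges (E' i : Set (Sym2 V)) := by
      intro u v huv
      rw [hGh, SimpleGraph.deleteEdges_adj] at huv
      rw [SimpleGraph.deleteEdges_adj]
      refine ⟨huv.1, fun hc => huv.2 ?_⟩
      have : s(u,v) ∈ W := Finset.mem_biUnion.2 ⟨i, Finset.mem_range.2 hi, by exact_mod_cast hc⟩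
      exact_mod_cast this
    have := hfar i hi a ha b hb (w.mapLe hle)
    rwa [Walk.length_map] at this
  have hpairmem : ∀ i < z, ∀ p ∈ M i, p.1 ∈ A i ∧ p.2 ∈ B i := by
    intro i hi p hp
    have := hMsub i hi hp
    rwa [Finset.mem_product] at this
  have hpairne : ∀ i < z, ∀ p ∈ M i, p.1 ≠ p.2 := by
    intro i hi p hp h
    obtain ⟨h1, h2⟩ := hpairmem i hi p hp
    exact Finset.disjoint_left.1 (hdisj i hi) h1 (h ▸ h2)
  have hedge_new : ∀ i < z, ∀ p ∈ M i, ¬ (G i).Adj p.1 p.2 := by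
    intro i hi p hp hadj
    obtain ⟨h1, h2⟩ := hpairmem i hi p hp
    have hadj' : ((G i).deleteEdges (E' i : Set (Sym2 V))).Adj p.1 p.2 := by
      rw [SimpleGraph.deleteEdges_adj]
      exact ⟨hadj, fun hc => hMnotE' i hi p hp (by exact_mod_cast hc)⟩
    have := hfar i hi p.1 h1 p.2 h2 (Walk.cons hadj' Walk.nil)
    simp only [Walk.length_cons, Walk.length_nil, Nat.cast_one, zero_add, Nat.cast_ofNat] at this
    linarith
  have hedge_next : ∀ i < z, ∀ p ∈ M i, (G (i+1)).Adj p.1 p.2 := by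
    intro i hi p hp
    rw [hGsucc i hi]
    have hne := hpairne i hi p hp
    simp only [sup_adj, SimpleGraph.fromEdgeSet_adj, Set.mem_setOf_eq]
    exact Or.inr ⟨⟨p, hp, rfl⟩, hne⟩
  have hσinj : ∀ i < z, ∀ p ∈ M i, ∀ q ∈ M i, s(p.1, p.2) = s(q.1, q.2) → p = q := by
    intro i hi p hp q hq h
    rw [Sym2.eq_iff] at h
    rcases h with ⟨h1, h2⟩ | ⟨h1, h2⟩
    · exact Prod.ext h1 h2
    · exact absurd h1 (fun hc =>
        Finset.disjoint_left.1 (hdisj i hi) (hpairmem i hi p hp).1 (hc ▸ (hpairmem i hi q hq).2))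
  classical
  -- surviving matching pairs
  set T : ℕ → Finset (V × V) := fun i => (M i).filter (fun p => s(p.1, p.2) ∈ W) with hT
  set S : ℕ → Finset (V × V) := fun i => M i \ T i with hS
  have hTsubM : ∀ i, T i ⊆ M i := fun i => Finset.filter_subset _ _
  have hSsubM : ∀ i, S i ⊆ M i := fun i => Finset.sdiff_subset
  have hSmem : ∀ i, ∀ p ∈ S i, s(p.1, p.2) ∉ W := by
    intro i p hp
    rw [hS, Finset.mem_sdiff] at hp
    intro hc
    exact hp.2 (Finset.mem_filter.2 ⟨hp.1, hc⟩)
  have hSTcard : ∀ i, (T i).card + (S i).card = (M i).card := by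
    intro i
    rw [hS, Finset.card_sdiff_of_subset (hTsubM i)]
    have := Finset.card_le_card (hTsubM i)
    omega
  have hTsum : ∑ i ∈ Finset.range z, ((T i).card : ℝ) ≤ (W.card : ℝ) := by
    set U : ℕ → Finset (Sym2 V) := fun i => (T i).image (fun p : V × V => s(p.1, p.2)) with hU
    have hUcard : ∀ i ∈ Finset.range z, (U i).card = (T i).card := by
      intro i hi
      apply Finset.card_image_of_injOn
      intro p hp q hq h
      exact hσinj i (Finset.mem_range.1 hi) p (Finset.filter_subset _ _ hp)
        q (Finset.filter_subset _ _ hq) h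
    have hUsub : ∀ i ∈ Finset.range z, U i ⊆ W := by
      intro i hi e he
      obtain ⟨p, hp, rfl⟩ := Finset.mem_image.1 he
      exact (Finset.mem_filter.1 hp).2
    have hUkey : ∀ i i', i < i' → i' < z → Disjoint (U i) (U i') := by
      intro i i' hii hi'z
      rw [Finset.disjoint_left]
      intro e hei hei'
      obtain ⟨p, hp, rfl⟩ := Finset.mem_image.1 hei
      obtain ⟨q, hq, he⟩ := Finset.mem_image.1 hei'
      have hpM : p ∈ M i := Finset.filter_subset _ _ hp
      have hqM : q ∈ M i' := Finset.filter_subset _ _ hq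
      have hadj1 : (G (i+1)).Adj p.1 p.2 := hedge_next i (by omega) p hpM
      have hle := hGmono i' (le_of_lt hi'z) (i+1) (by omega)
      have hadj2 : (G i').Adj p.1 p.2 := hle hadj1
      apply hedge_new i' hi'z q hqM
      have he' : s(q.1, q.2) = s(p.1, p.2) := he
      rw [← SimpleGraph.mem_edgeSet, he', SimpleGraph.mem_edgeSet]
      exact hadj2
    have hUdisj : ∀ i ∈ Finset.range z, ∀ i' ∈ Finset.range z, i ≠ i' → Disjoint (U i) (U i') := by
      intro i hi i' hi' hne
      rcases Nat.lt_or_ge i i' with h | h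
      · exact hUkey i i' h (Finset.mem_range.1 hi')
      · exact (hUkey i' i (by omega) (Finset.mem_range.1 hi)).symm
    have : ∑ i ∈ Finset.range z, (U i).card ≤ W.card := by
      rw [← Finset.card_biUnion hUdisj]
      exact Finset.card_le_card (Finset.biUnion_subset.2 hUsub)
    calc ∑ i ∈ Finset.range z, ((T i).card : ℝ)
        = ∑ i ∈ Finset.range z, ((U i).card : ℝ) := by
          refine Finset.sum_congr rfl (fun i hi => ?_)
          exact_mod_cast (hUcard i hi).symm
      _ = ((∑ i ∈ Finset.range z, (U i).card : ℕ) : ℝ) := by push_cast; rfl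
      _ ≤ (W.card : ℝ) := by exact_mod_cast this
  have hWbound : (W.card : ℝ) ≤ ∑ i ∈ Finset.range z, ((A i).card : ℝ) / 16 := by
    calc (W.card : ℝ) ≤ ((∑ i ∈ Finset.range z, (E' i).card : ℕ) : ℝ) := by
          exact_mod_cast Finset.card_biUnion_le
      _ = ∑ i ∈ Finset.range z, ((E' i).card : ℝ) := by push_cast; rfl
      _ ≤ _ := Finset.sum_le_sum (fun i hi => hE'card i (Finset.mem_range.1 hi))
  have hScount : (z : ℝ) * ((n:ℝ) ^ (1 - δ) / 16) ≤ ∑ i ∈ Finset.range z, ((S i).card : ℝ) := by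
    have e1 : ∑ i ∈ Finset.range z, ((A i).card : ℝ) / 8 ≤ ∑ i ∈ Finset.range z, ((M i).card : ℝ) := by
      refine Finset.sum_le_sum (fun i hi => ?_)
      have := hMcard i (Finset.mem_range.1 hi)
      have : ((A i).card : ℝ) ≤ 8 * ((M i).card : ℝ) := by exact_mod_cast this
      linarith
    have e3 : ∑ i ∈ Finset.range z, ((S i).card : ℝ)
        = ∑ i ∈ Finset.range z, ((M i).card : ℝ) - ∑ i ∈ Finset.range z, ((T i).card : ℝ) := by
      rw [← Finset.sum_sub_distrib]
      refine Finset.sum_congr rfl (fun i hi => ?_)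
      have := hSTcard i
      have : ((T i).card : ℝ) + ((S i).card : ℝ) = ((M i).card : ℝ) := by exact_mod_cast this
      linarith
    have e4 : ∑ i ∈ Finset.range z, ((A i).card : ℝ) / 8
        = 2 * ∑ i ∈ Finset.range z, ((A i).card : ℝ) / 16 := by
      rw [Finset.mul_sum]
      exact Finset.sum_congr rfl (fun i _ => by ring)
    have e5 : (z : ℝ) * ((n:ℝ) ^ (1 - δ) / 16) ≤ ∑ i ∈ Finset.range z, ((A i).card : ℝ) / 16 := by
      calc (z : ℝ) * ((n:ℝ) ^ (1 - δ) / 16) = ∑ _i ∈ Finset.range z, ((n:ℝ) ^ (1-δ) / 16) := by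
            rw [Finset.sum_const, Finset.card_range, nsmul_eq_mul]
        _ ≤ _ := Finset.sum_le_sum (fun i hi => by
            have := hlarge i (Finset.mem_range.1 hi)
            linarith)
    linarith
  -- potential function
  set bc : ℕ → V → ℕ → ℕ := fun i v j => (mball (Gh i) v (r j)).card with hbc
  set Φ : ℕ → ℝ := fun i => ∑ v : V, ∑ j ∈ Finset.range (J+1), Real.logb 2 (bc i v j) with hΦ
  have hbc1 : ∀ i v j, 1 ≤ bc i v j := fun i v j => mball_card_pos _ _ _
  have hbc1' : ∀ i v j, (1:ℝ) ≤ (bc i v j : ℝ) := by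
    intro i v j; exact_mod_cast hbc1 i v j
  have hbcn : ∀ i v j, (bc i v j : ℝ) ≤ (n : ℝ) := by
    intro i v j
    have := mball_card_le (Gh i) v (r j)
    rw [← hn] at this
    exact_mod_cast this
  have hbcr : ∀ i v j, bc i v j ≤ bc i v (j+1) := fun i v j =>
    Finset.card_le_card (mball_mono_radius _ _ (hrmono j))
  have hbci : ∀ i < z, ∀ v j, bc i v j ≤ bc (i+1) v j := fun i hi v j =>
    Finset.card_le_card (mball_mono_graph (hGhmono i hi) _ _)
  have hlogle : ∀ i < z, ∀ v j, Real.logb 2 (bc i v j) ≤ Real.logb 2 (bc (i+1) v j) := by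
    intro i hi v j
    refine Real.logb_le_logb_of_le (by norm_num) (Nat.cast_pos.2 (hbc1 i v j)) ?_
    exact_mod_cast hbci i hi v j
  have hΦ0 : Φ 0 = 0 := by
    have hGh0 : Gh 0 = (⊥ : SimpleGraph V) := by
      rw [hGh]; simp only [hG0]
      apply le_bot_iff.1
      intro u v huv
      rw [SimpleGraph.deleteEdges_adj] at huv
      exact absurd huv.1 (by simp)
    rw [hΦ]
    simp only [hbc, hGh0, mball_bot, Finset.card_singleton, Nat.cast_one, Real.logb_one,
      Finset.sum_const, smul_zero]
  have hΦz : Φ z ≤ (n : ℝ) * (((J:ℝ)+1) * L) := by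
    rw [hΦ]
    have hterm : ∀ v : V, ∑ j ∈ Finset.range (J+1), Real.logb 2 (bc z v j) ≤ ((J:ℝ)+1) * L := by
      intro v
      calc ∑ j ∈ Finset.range (J+1), Real.logb 2 (bc z v j)
          ≤ ∑ _j ∈ Finset.range (J+1), L := by
            refine Finset.sum_le_sum (fun j _ => ?_)
            rw [hL]
            exact Real.logb_le_logb_of_le (by norm_num) (Nat.cast_pos.2 (hbc1 z v j)) (hbcn z v j)
        _ = ((J:ℝ)+1) * L := by
            rw [Finset.sum_const, Finset.card_range, nsmul_eq_mul]; push_cast; ring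
    calc ∑ v : V, ∑ j ∈ Finset.range (J+1), Real.logb 2 (bc z v j)
        ≤ ∑ _v : V, ((J:ℝ)+1) * L := Finset.sum_le_sum (fun v _ => hterm v)
      _ = (n : ℝ) * (((J:ℝ)+1) * L) := by
          rw [Finset.sum_const, nsmul_eq_mul, Finset.card_univ, ← hn]
  -- per-round gain
  have hround : ∀ i < z, ((S i).card : ℝ) * (1/P) ≤ Φ (i+1) - Φ i := by
    intro i hi
    set g : V → ℝ := fun v =>
      ∑ j ∈ Finset.range (J+1), (Real.logb 2 (bc (i+1) v j) - Real.logb 2 (bc i v j)) with hg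
    have hg0 : ∀ v, 0 ≤ g v := by
      intro v
      refine Finset.sum_nonneg (fun j _ => ?_)
      have := hlogle i hi v j
      linarith
    have hΦdiff : Φ (i+1) - Φ i = ∑ v : V, g v := by
      have e1 : ∑ v : V, g v
          = (∑ v : V, ∑ j ∈ Finset.range (J+1), Real.logb 2 (bc (i+1) v j))
            - ∑ v : V, ∑ j ∈ Finset.range (J+1), Real.logb 2 (bc i v j) := by
        rw [← Finset.sum_sub_distrib]
        exact Finset.sum_congr rfl (fun v _ =>
          (Finset.sum_sub_distrib (s := Finset.range (J+1))
            (f := fun j => Real.logb 2 (bc (i+1) v j))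
            (g := fun j => Real.logb 2 (bc i v j))))
      rw [e1]
    have hpair : ∀ p ∈ S i, ∃ y, (y = p.1 ∨ y = p.2) ∧ 1/P ≤ g y := by
      intro p hp
      have hpM : p ∈ M i := hSsubM i hp
      have hpW : s(p.1, p.2) ∉ W := hSmem i p hp
      obtain ⟨haA, hbB⟩ := hpairmem i hi p hpM
      have hbadcard : ∀ v : V,
          ((Finset.range J).filter (fun j => P * ((bc i v j : ℕ) : ℝ) ≤ ((bc i v (j+1) : ℕ) : ℝ))).card ≤ K := by
        intro v
        rw [hK, hP]
        exact unstable_count hN2 hδ0 (fun j => ((bc i v j : ℕ) : ℝ)) (fun j => hbc1' i v j)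
          (fun j => by show ((bc i v j : ℕ) : ℝ) ≤ ((bc i v (j+1) : ℕ) : ℝ)
                       exact_mod_cast hbcr i v j) J (hbcn i v J)
      obtain ⟨j, hjmem, hjgood⟩ : ∃ j ∈ Finset.range J,
          j ∉ ((Finset.range J).filter (fun j => P * ((bc i p.1 j : ℕ) : ℝ) ≤ ((bc i p.1 (j+1) : ℕ) : ℝ)))
            ∪ ((Finset.range J).filter (fun j => P * ((bc i p.2 j : ℕ) : ℝ) ≤ ((bc i p.2 (j+1) : ℕ) : ℝ))) := by
        by_contra hcon
        push_neg at hcon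
        have hcard : (Finset.range J).card ≤
            (((Finset.range J).filter (fun j => P * ((bc i p.1 j : ℕ) : ℝ) ≤ ((bc i p.1 (j+1) : ℕ) : ℝ)))
              ∪ ((Finset.range J).filter (fun j => P * ((bc i p.2 j : ℕ) : ℝ) ≤ ((bc i p.2 (j+1) : ℕ) : ℝ)))).card :=
          Finset.card_le_card (fun j hj => hcon j hj)
        have hcard2 := Finset.card_union_le
          ((Finset.range J).filter (fun j => P * ((bc i p.1 j : ℕ) : ℝ) ≤ ((bc i p.1 (j+1) : ℕ) : ℝ)))
          ((Finset.range J).filter (fun j => P * ((bc i p.2 j : ℕ) : ℝ) ≤ ((bc i p.2 (j+1) : ℕ) : ℝ)))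
        have b1 := hbadcard p.1
        have b2 := hbadcard p.2
        rw [Finset.card_range] at hcard
        have hJ' : J = 2 * K + 1 := hJ
        omega
      rw [Finset.mem_union, not_or] at hjgood
      have hjJ : j < J := Finset.mem_range.1 hjmem
      have hga : ((bc i p.1 (j+1) : ℕ) : ℝ) < P * ((bc i p.1 j : ℕ) : ℝ) := by
        by_contra hc
        push_neg at hc
        exact hjgood.1 (Finset.mem_filter.2 ⟨hjmem, hc⟩)
      have hgb : ((bc i p.2 (j+1) : ℕ) : ℝ) < P * ((bc i p.2 j : ℕ) : ℝ) := by
        by_contra hc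
        push_neg at hc
        exact hjgood.2 (Finset.mem_filter.2 ⟨hjmem, hc⟩)
      have hgain : ∀ x y : V, (Gh (i+1)).Adj y x →
          (∀ w : (Gh i).Walk x y, d ≤ (w.length : ℝ)) →
          (((bc i y (j+1) : ℕ) : ℝ) < P * ((bc i y j : ℕ) : ℝ)) →
          (((bc i y j : ℕ) : ℝ) ≤ ((bc i x j : ℕ) : ℝ)) → 1/P ≤ g y := by
        intro x y hadj hfarxy hstab hle
        have hdisjb : Disjoint (mball (Gh i) x (r j)) (mball (Gh i) y (r (j+1))) :=
          mball_disj hfarxy (hrd j (by omega) (j+1) (by omega))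
        have hcard := mball_card_growth (hGhmono i hi) hadj (hrsucc j) hdisjb
        have hcard' : ((bc i y (j+1) : ℕ) : ℝ) + ((bc i x j : ℕ) : ℝ) ≤ ((bc (i+1) y (j+1) : ℕ) : ℝ) := by
          exact_mod_cast hcard
        have hc1 : (1:ℝ) ≤ ((bc i y (j+1) : ℕ) : ℝ) := hbc1' i y (j+1)
        have hPinv : (1/P) * P = 1 := by field_simp
        have hPinv0 : (0:ℝ) < 1/P := by positivity
        have h2 : (1/P) * ((bc i y (j+1) : ℕ) : ℝ) ≤ ((bc i x j : ℕ) : ℝ) := by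
          nlinarith [hbc1' i y j]
        have hgrow : (1 + 1/P) * ((bc i y (j+1) : ℕ) : ℝ) ≤ ((bc (i+1) y (j+1) : ℕ) : ℝ) := by
          nlinarith
        have hlog := logb_gain hPinv0.le (by rw [div_le_one hP0]; exact hP1) hc1 hgrow
        have hterm : ∀ k ∈ Finset.range (J+1),
            0 ≤ Real.logb 2 (bc (i+1) y k) - Real.logb 2 (bc i y k) := by
          intro k _
          have := hlogle i hi y k
          linarith
        have hj1 : j + 1 ∈ Finset.range (J+1) := Finset.mem_range.2 (by omega)
        calc 1/P ≤ Real.logb 2 (bc (i+1) y (j+1)) - Real.logb 2 (bc i y (j+1)) := by linarith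
          _ ≤ g y := by
              rw [hg]
              exact Finset.single_le_sum hterm hj1
      have hadjG : (G (i+1)).Adj p.1 p.2 := hedge_next i hi p hpM
      have hadj1 : (Gh (i+1)).Adj p.1 p.2 := by
        rw [hGh]
        rw [SimpleGraph.deleteEdges_adj]
        exact ⟨hadjG, fun hc => hpW (by exact_mod_cast hc)⟩
      have hadj2 : (Gh (i+1)).Adj p.2 p.1 := hadj1.symm
      have hfar1 : ∀ w : (Gh i).Walk p.1 p.2, d ≤ (w.length : ℝ) :=
        fun w => hGhfar i hi p.1 haA p.2 hbB w
      have hfar2 : ∀ w : (Gh i).Walk p.2 p.1, d ≤ (w.length : ℝ) := by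
        intro w
        have := hGhfar i hi p.1 haA p.2 hbB w.reverse
        rwa [Walk.length_reverse] at this
      rcases le_total ((bc i p.2 j : ℕ) : ℝ) ((bc i p.1 j : ℕ) : ℝ) with hor | hor
      · exact ⟨p.2, Or.inr rfl, hgain p.1 p.2 hadj2 hfar1 hgb hor⟩
      · exact ⟨p.1, Or.inl rfl, hgain p.2 p.1 hadj1 hfar2 hga hor⟩
    set Y : V × V → V := fun p =>
      if h : ∃ y, (y = p.1 ∨ y = p.2) ∧ 1/P ≤ g y then h.choose else p.1 with hYdef
    have hYspec : ∀ p ∈ S i, (Y p = p.1 ∨ Y p = p.2) ∧ 1/P ≤ g (Y p) := by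
      intro p hp
      have h := hpair p hp
      rw [hYdef]
      simp only [dif_pos h]
      exact h.choose_spec
    have hY1 : ∀ p ∈ S i, Y p = p.1 ∨ Y p = p.2 := fun p hp => (hYspec p hp).1
    have hY2 : ∀ p ∈ S i, 1/P ≤ g (Y p) := fun p hp => (hYspec p hp).2
    have hYinj : ∀ p ∈ S i, ∀ q ∈ S i, Y p = Y q → p = q := by
      intro p hp q hq h
      have hpM := hSsubM i hp
      have hqM := hSsubM i hq
      have h1 := hY1 p hp
      have h2 := hY1 q hq
      have hApq := hpairmem i hi p hpM
      have hAq := hpairmem i hi q hqM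
      rcases h1 with h1 | h1 <;> rcases h2 with h2 | h2
      · exact hMinj1 i hi (Finset.mem_coe.2 hpM) (Finset.mem_coe.2 hqM) (by rw [← h1, ← h2, h])
      · exfalso
        have hc : p.1 = q.2 := by rw [← h1, ← h2, h]
        have : q.2 ∈ A i := hc ▸ hApq.1
        exact (Finset.disjoint_left.1 (hdisj i hi) this) hAq.2
      · exfalso
        have hc : p.2 = q.1 := by rw [← h1, ← h2, h]
        have : q.1 ∈ B i := hc ▸ hApq.2
        exact (Finset.disjoint_left.1 (hdisj i hi) hAq.1) this
      · exact hMinj2 i hi (Finset.mem_coe.2 hpM) (Finset.mem_coe.2 hqM) (by rw [← h1, ← h2, h])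
    calc ((S i).card : ℝ) * (1/P) = ∑ _p ∈ S i, (1/P) := by
          rw [Finset.sum_const, nsmul_eq_mul]
      _ ≤ ∑ p ∈ S i, g (Y p) := Finset.sum_le_sum (fun p hp => hY2 p hp)
      _ = ∑ v ∈ (S i).image Y, g v := (Finset.sum_image hYinj).symm
      _ ≤ ∑ v : V, g v := Finset.sum_le_sum_of_subset_of_nonneg
          (Finset.subset_univ _) (fun v _ _ => hg0 v)
      _ = Φ (i+1) - Φ i := hΦdiff.symm
  -- telescoping and conclusion
  have htel : ∑ i ∈ Finset.range z, (Φ (i+1) - Φ i) = Φ z - Φ 0 := Finset.sum_range_sub Φ z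
  have hsum1 : (∑ i ∈ Finset.range z, ((S i).card : ℝ)) * (1/P) ≤ Φ z := by
    calc (∑ i ∈ Finset.range z, ((S i).card : ℝ)) * (1/P)
        = ∑ i ∈ Finset.range z, ((S i).card : ℝ) * (1/P) := Finset.sum_mul _ _ _
      _ ≤ ∑ i ∈ Finset.range z, (Φ (i+1) - Φ i) :=
          Finset.sum_le_sum (fun i hi => hround i (Finset.mem_range.1 hi))
      _ = Φ z - Φ 0 := htel
      _ = Φ z := by rw [hΦ0]; ring
  have hmain : (z : ℝ) * ((n:ℝ) ^ (1 - δ) / 16) * (1/P) ≤ (n : ℝ) * (((J:ℝ)+1) * L) := by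
    have h2 := mul_le_mul_of_nonneg_right hScount (le_of_lt (by positivity : (0:ℝ) < 1/P))
    linarith [hsum1, hΦz]
  have hsplit : (n:ℝ) ^ (1 - δ) = (n:ℝ) / P := by
    rw [Real.rpow_sub hN0, Real.rpow_one, hP]
  have hzP : (z:ℝ) ≤ 16 * P^2 * (((J:ℝ)+1) * L) := by
    have e : (z:ℝ) * ((n:ℝ)/P/16) * (1/P) = (z:ℝ) * (n:ℝ) / (16*P^2) := by
      field_simp
    rw [hsplit, e, div_le_iff₀ (by positivity : (0:ℝ) < 16*P^2)] at hmain
    have h3 : (z:ℝ) * (n:ℝ) ≤ (16*P^2*(((J:ℝ)+1)*L)) * (n:ℝ) := by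
      calc (z:ℝ) * (n:ℝ) ≤ (n:ℝ) * (((J:ℝ)+1)*L) * (16*P^2) := hmain
        _ = (16*P^2*(((J:ℝ)+1)*L)) * (n:ℝ) := by ring
    exact le_of_mul_le_mul_right h3 hN0
  have hLb : L ≤ δ^2 * P / 2^14 := by
    have h := mul_le_mul_of_nonneg_right hnδ (le_of_lt (by positivity : (0:ℝ) < δ^2/2^14))
    have e : (2^14 * L/δ^2) * (δ^2/2^14) = L := by field_simp
    rw [e] at h
    calc L ≤ P * (δ^2/2^14) := h
      _ = δ^2 * P / 2^14 := by ring
  have hs1 : (z:ℝ) ≤ 16*P^2*((4/δ)*L) := by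
    have hJL : ((J:ℝ)+1)*L ≤ (4/δ)*L := mul_le_mul_of_nonneg_right hJδ hL0
    calc (z:ℝ) ≤ 16*P^2*(((J:ℝ)+1)*L) := hzP
      _ ≤ 16*P^2*((4/δ)*L) := by
          exact mul_le_mul_of_nonneg_left hJL (by positivity)
  have hLδ : L/δ ≤ δ*P/2^14 := by
    rw [div_le_iff₀ hδ0]
    calc L ≤ δ^2*P/2^14 := hLb
      _ = δ*P/2^14*δ := by ring
  have hs3 : (z:ℝ) ≤ 64 * P^2 * (δ * P / 2^14) := by
    calc (z:ℝ) ≤ 16*P^2*((4/δ)*L) := hs1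
      _ = 64*P^2*(L/δ) := by
          field_simp
          ring
      _ ≤ 64*P^2*(δ*P/2^14) := mul_le_mul_of_nonneg_left hLδ (by positivity)
  have hs5 : 64*P^2*(δ*P/2^14) ≤ P^3 := by
    nlinarith [pow_pos hP0 3, hδ4, hδ0, hP0]
  have hP3 : P^3 = (n:ℝ)^(3*δ) := by
    rw [hP, ← Real.rpow_natCast ((n:ℝ)^δ) 3, ← Real.rpow_mul hN0.le]
    norm_num [mul_comm]
  have hfin : (n:ℝ)^(3*δ) ≤ (n:ℝ)^(8*δ) := Real.rpow_le_rpow_of_exponent_le hN1 (by linarith)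
  have : P^3 ≤ (n:ℝ)^(8*δ) := by rw [hP3]; exact hfin
  linarith [hs3, hs5]
end
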